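/- arXiv:2312.07313 — 5 statements merged into one kernel-verified Lean document; each statement's English description precedes it below -/
import Mathlib

section
/- Under Assumptions (A1)–(A3), for every δ ∈ (0, δ_*) there exists a constant c > 0 such that for all sufficiently large n, P[ |X_n/n − a_j| > δ for all j ∈ J ] ≤ exp(−c n). -/
open Classical Filter MeasureTheory

set_option maxHeartbeats 1000000 in
/-- Theorem 2, first concentration inequality \eqref{7}: under (A1)–(A3), for every
`δ ∈ (0, δ_*)` there is `c > 0` with `P[|X_n/n − a_j| > δ for all j ∈ J] ≤ exp(−cn)`
for all large `n`. -/
theorem concentration_exponential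
    (mstar : ℕ) (hmstar : 1 ≤ mstar)
    (J : Type) [Fintype J] [Nonempty J]
    (a : J → ℝ) (m : J → ℕ) (hm1 : ∀ j, 1 ≤ m j)
    (An Bn : ℕ → ℕ → ℝ)
    (A B : ℝ → ℝ)
    (hA : ContDiff ℝ (2 * mstar + 1) A)
    (hB : ContDiff ℝ 2 B)
    (es ds Cs : ℝ) (hes : 0 < es) (hds : 0 < ds) (hCs : 0 < Cs)
    -- the perturbed model: σ_{*,n} and the law of X_n
    (σ : ℕ → ℝ) (hσ : ∀ n : ℕ, σ n = (n : ℝ) ^ ((-1 : ℝ) + 1 / (2 * (mstar : ℝ))))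
    (P : ℕ → ℕ → ℝ)
    (hP : ∀ n k : ℕ, P n k =
      Real.exp ((n : ℝ) * An n k + (n : ℝ) * σ n * Bn n k) /
        ∑ l ∈ Finset.range (n + 1),
          Real.exp ((n : ℝ) * An n l + (n : ℝ) * σ n * Bn n l))
    -- (A1)
    (ha : ∀ j, a j ∈ Set.Ioo (0 : ℝ) 1)
    (hmaximizers : ∀ x ∈ Set.Icc (0 : ℝ) 1,
      ((∀ y ∈ Set.Icc (0 : ℝ) 1, A y ≤ A x) ↔ ∃ j, a j = x))
    (hmle : ∀ j, m j ≤ mstar) (hmtop : ∃ j, m j = mstar)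
    (hder : ∀ j, ∀ k : ℕ, 1 ≤ k → k ≤ 2 * m j - 1 → iteratedDeriv k A (a j) = 0)
    (hneg : ∀ j, ∀ x : ℝ, |x - a j| ≤ ds → iteratedDeriv (2 * m j) A x < 0)
    (hdisj : ∀ i j : J, i ≠ j →
      Disjoint (Set.Ioo (a i - ds) (a i + ds)) (Set.Ioo (a j - ds) (a j + ds)))
    (hsubset : ∀ j, Set.Ioo (a j - ds) (a j + ds) ⊆ Set.Ioo (0 : ℝ) 1)
    -- (A2)
    (hA2 : ∃ N : ℕ, ∀ n ≥ N, ∀ k ≤ n, (∀ j, ds ≤ |(k : ℝ) / n - a j|) →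
      An n k ≤ sSup (A '' Set.Icc 0 1) - es ∧ |Bn n k| ≤ Cs)
    -- (A3i)
    (hA3i : ∃ N : ℕ, ∀ n ≥ N, ∀ k ≤ n, (∃ j, |(k : ℝ) / n - a j| < ds) →
      |An n k - A ((k : ℝ) / n)| ≤ Cs * Real.log n / n ∧
      |Bn n k - B ((k : ℝ) / n)| ≤ Cs / n)
    -- (A3ii)
    (hA3ii : ∃ N : ℕ, ∀ n ≥ N, ∀ k ≤ n, ∀ l ≤ n,
      (∃ j, |(k : ℝ) / n - a j| < ds ∧ |(l : ℝ) / n - a j| < ds) →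
      |(An n k - An n l) - (A ((k : ℝ) / n) - A ((l : ℝ) / n))| ≤
        Cs * |(k : ℝ) - (l : ℝ)| / (n : ℝ) ^ 2)
    :
    ∀ δ : ℝ, 0 < δ → δ < ds →
      ∃ c : ℝ, 0 < c ∧ ∃ N : ℕ, ∀ n ≥ N,
        (∑ k ∈ Finset.range (n + 1),
            if ∀ j, δ < |(k : ℝ) / n - a j| then P n k else 0) ≤
          Real.exp (-c * n) := by
  intro δ hδ0 hδds
  obtain ⟨j₀⟩ := (inferInstance : Nonempty J)
  set M := sSup (A '' Set.Icc (0:ℝ) 1) with hMdef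
  have hAcont : Continuous A := hA.continuous
  have haIcc : ∀ j, a j ∈ Set.Icc (0:ℝ) 1 := fun j => ⟨(ha j).1.le, (ha j).2.le⟩
  have hbdd : BddAbove (A '' Set.Icc (0:ℝ) 1) := (isCompact_Icc.image hAcont).bddAbove
  have hle_M : ∀ y ∈ Set.Icc (0:ℝ) 1, A y ≤ M := fun y hy => le_csSup hbdd ⟨y, hy, rfl⟩
  have hAaM : ∀ j, A (a j) = M := by
    intro j
    have hmax := (hmaximizers (a j) (haIcc j)).mpr ⟨j, rfl⟩
    refine le_antisymm (hle_M _ (haIcc j)) ?_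
    exact csSup_le ⟨A 0, ⟨0, by norm_num, rfl⟩⟩
      (fun b ⟨y, hy, hby⟩ => hby ▸ hmax y hy)
  have hads : ∀ j, ds ≤ a j := by
    intro j
    have h := (Set.Ioo_subset_Ioo_iff (by linarith : a j - ds < a j + ds)).mp (hsubset j)
    linarith [h.1]
  -- the compact set of δ-far points
  set K := Set.Icc (0:ℝ) 1 ∩ {x | ∀ j, δ ≤ |x - a j|} with hKdef
  have hKclosed : IsClosed {x : ℝ | ∀ j, δ ≤ |x - a j|} := by
    have hset : {x : ℝ | ∀ j, δ ≤ |x - a j|} = ⋂ j, {x | δ ≤ |x - a j|} := by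
      ext x; simp [Set.mem_iInter]
    rw [hset]
    exact isClosed_iInter fun j =>
      isClosed_le continuous_const ((continuous_id.sub continuous_const).abs)
  have hKcompact : IsCompact K := isCompact_Icc.inter_right hKclosed
  have hKne : K.Nonempty := by
    refine ⟨0, ⟨⟨le_refl 0, by norm_num⟩, ?_⟩⟩
    intro j
    have h0 : |(0:ℝ) - a j| = a j := by
      rw [zero_sub, abs_neg, abs_of_pos (ha j).1]
    show δ ≤ |(0:ℝ) - a j|
    rw [h0]
    linarith [hads j]
  obtain ⟨x₀, hx₀K, hx₀max⟩ := hKcompact.exists_isMaxOn hKne hAcont.continuousOn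
  have hx₀lt : A x₀ < M := by
    rcases lt_or_ge (A x₀) M with h | h
    · exact h
    · exfalso
      have heq : ∀ y ∈ Set.Icc (0:ℝ) 1, A y ≤ A x₀ := fun y hy => (hle_M y hy).trans h
      obtain ⟨j, hj⟩ := (hmaximizers x₀ hx₀K.1).mp heq
      have h2 := hx₀K.2 j
      rw [hj] at h2
      simp at h2; linarith
  set ε := min (M - A x₀) es with hεdef
  have hε : 0 < ε := lt_min (by linarith) hes
  have hεes : ε ≤ es := min_le_right _ _
  have hKbound : ∀ x ∈ K, A x ≤ M - ε := by
    intro x hx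
    have h1 : A x ≤ A x₀ := isMaxOn_iff.mp hx₀max x hx
    have h2 : ε ≤ M - A x₀ := min_le_left _ _
    linarith
  -- bound on B
  obtain ⟨CB, hCB⟩ := isCompact_Icc.exists_bound_of_continuousOn hB.continuous.continuousOn
  set D := |CB| + Cs with hDdef
  have hD0 : 0 < D := by positivity
  have hCsD : Cs ≤ D := le_add_of_nonneg_left (abs_nonneg _)
  -- bounds on n * σ n
  have hm1R : (1:ℝ) ≤ (mstar:ℝ) := by exact_mod_cast hmstar
  have hnσ : ∀ n : ℕ, 1 ≤ n → 0 ≤ (n:ℝ) * σ n ∧ (n:ℝ) * σ n ≤ Real.sqrt n := by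
    intro n hn
    have hn1 : (1:ℝ) ≤ (n:ℝ) := by exact_mod_cast hn
    have hn0 : (0:ℝ) < n := by linarith
    have h1 : (n:ℝ) * σ n = (n:ℝ) ^ (1 / (2 * (mstar:ℝ))) := by
      rw [hσ n]
      have h2 := Real.rpow_add hn0 1 ((-1:ℝ) + 1/(2*(mstar:ℝ)))
      rw [Real.rpow_one] at h2
      rw [← h2]
      congr 1
      ring
    constructor
    · rw [h1]; positivity
    · rw [h1, Real.sqrt_eq_rpow]
      apply Real.rpow_le_rpow_of_exponent_le hn1
      have : (2:ℝ) ≤ 2 * (mstar:ℝ) := by linarith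
      calc 1 / (2 * (mstar:ℝ)) ≤ 1 / 2 := by
            apply one_div_le_one_div_of_le (by norm_num) this
        _ = 1 / 2 := rfl
  -- the witness index near a j₀
  set k₀ : ℕ → ℕ := fun n => ⌊(n:ℝ) * a j₀⌋₊ with hk₀def
  have hk₀le : ∀ n : ℕ, 1 ≤ n → (k₀ n ≤ n ∧ |((k₀ n : ℝ))/n - a j₀| ≤ 1/n) := by
    intro n hn
    have hn1 : (1:ℝ) ≤ (n:ℝ) := by exact_mod_cast hn
    have hn0 : (0:ℝ) < n := by linarith
    have hna : (0:ℝ) ≤ (n:ℝ) * a j₀ := mul_nonneg hn0.le (ha j₀).1.le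
    have hfl : (k₀ n : ℝ) ≤ (n:ℝ) * a j₀ := Nat.floor_le hna
    have hfl2 : (n:ℝ) * a j₀ < (k₀ n : ℝ) + 1 := Nat.lt_floor_add_one _
    have h1 : (k₀ n:ℝ)/n ≤ a j₀ := by
      rw [div_le_iff₀ hn0]
      calc (k₀ n : ℝ) ≤ (n:ℝ) * a j₀ := hfl
        _ = a j₀ * n := by ring
    have h2 : a j₀ - 1/n ≤ (k₀ n:ℝ)/n := by
      rw [sub_le_iff_le_add, ← add_div, le_div_iff₀ hn0]
      calc a j₀ * n = (n:ℝ) * a j₀ := by ring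
        _ ≤ (k₀ n : ℝ) + 1 := hfl2.le
    constructor
    · have h3 : (k₀ n : ℝ) < n := lt_of_le_of_lt hfl (by nlinarith [(ha j₀).2])
      exact_mod_cast h3.le
    · have h1n : (0:ℝ) < 1/n := by positivity
      rw [abs_le]
      constructor <;> linarith
  have htend : Tendsto (fun n : ℕ => ((k₀ n : ℝ))/n) atTop (nhds (a j₀)) := by
    have hg : Tendsto (fun n : ℕ => a j₀ - 1/(n:ℝ)) atTop (nhds (a j₀)) := by
      simpa using (tendsto_const_nhds : Tendsto (fun _ : ℕ => a j₀) atTop (nhds (a j₀))).sub tendsto_one_div_atTop_nhds_zero_nat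
    have hh : Tendsto (fun n : ℕ => a j₀ + 1/(n:ℝ)) atTop (nhds (a j₀)) := by
      simpa using (tendsto_const_nhds : Tendsto (fun _ : ℕ => a j₀) atTop (nhds (a j₀))).add tendsto_one_div_atTop_nhds_zero_nat
    refine tendsto_of_tendsto_of_tendsto_of_le_of_le' hg hh ?_ ?_
    · filter_upwards [eventually_ge_atTop 1] with n hn
      have h1n : (0:ℝ) < (n:ℝ) := by exact_mod_cast hn
      have := abs_le.mp (hk₀le n hn).2
      linarith [this.1]
    · filter_upwards [eventually_ge_atTop 1] with n hn
      have h1n : (0:ℝ) < (n:ℝ) := by exact_mod_cast hn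
      have := abs_le.mp (hk₀le n hn).2
      linarith [this.2]
  have hAev : ∀ᶠ n : ℕ in atTop, M - ε/4 < A ((k₀ n : ℝ)/n) := by
    have hT : Tendsto (fun n : ℕ => A ((k₀ n : ℝ)/n)) atTop (nhds M) := by
      have := (hAcont.continuousAt (x := a j₀)).tendsto.comp htend
      rwa [hAaM j₀] at this
    exact hT.eventually (eventually_gt_nhds (by linarith))
  obtain ⟨N₄, hN₄⟩ := eventually_atTop.mp hAev
  obtain ⟨N₂, hN₂⟩ := hA2
  obtain ⟨N₃, hN₃⟩ := hA3i
  set E := 4 + 4*Cs + 2*D with hEdef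
  have hE0 : 0 < E := by positivity
  refine ⟨ε/8, by positivity, ?_⟩
  set N₅ := ⌈(8*E/(5*ε))^2⌉₊ + 1 with hN₅def
  set N₆ := ⌈1/ds⌉₊ + 1 with hN₆def
  refine ⟨N₂ + N₃ + N₄ + N₅ + N₆ + 1, ?_⟩
  intro n hn
  have hn1 : 1 ≤ n := by omega
  have hn1R : (1:ℝ) ≤ (n:ℝ) := by exact_mod_cast hn1
  have hn0 : (0:ℝ) < (n:ℝ) := by linarith
  have hlogn : 0 ≤ Real.log n := Real.log_nonneg hn1R
  obtain ⟨hσ0, hσle⟩ := hnσ n hn1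
  obtain ⟨hk₀n, hk₀abs⟩ := hk₀le n hn1
  have h1nds : 1/(n:ℝ) < ds := by
    have h1 : (1/ds : ℝ) < n := by
      have h2 : (1/ds : ℝ) ≤ (⌈(1/ds:ℝ)⌉₊ : ℝ) := Nat.le_ceil _
      have h3 : (⌈(1/ds:ℝ)⌉₊ : ℝ) < n := by exact_mod_cast (by omega : ⌈(1/ds:ℝ)⌉₊ < n)
      linarith
    rw [div_lt_iff₀ hn0]
    have := (div_lt_iff₀ hds).mp h1
    nlinarith
  -- |Bn| ≤ D near the maximizers
  have hBnbound : ∀ k, k ≤ n → (∃ j, |(k:ℝ)/n - a j| < ds) → |Bn n k| ≤ D := by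
    intro k hk hknear
    obtain ⟨_, hBnk⟩ := hN₃ n (by omega) k hk hknear
    have hkIcc : (k:ℝ)/n ∈ Set.Icc (0:ℝ) 1 :=
      ⟨by positivity, by rw [div_le_one hn0]; exact_mod_cast hk⟩
    have h1 : |B ((k:ℝ)/n)| ≤ |CB| := by
      have := hCB _ hkIcc
      rw [Real.norm_eq_abs] at this
      exact this.trans (le_abs_self CB)
    have h2 := abs_sub_abs_le_abs_sub (Bn n k) (B ((k:ℝ)/n))
    have h3 : Cs/(n:ℝ) ≤ Cs := div_le_self hCs.le hn1R
    rw [hDdef]; linarith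
  have hσB : ∀ b : ℝ, |b| ≤ D → |(n:ℝ) * σ n * b| ≤ Real.sqrt n * D := by
    intro b hb
    rw [abs_mul, abs_of_nonneg hσ0]
    exact mul_le_mul hσle hb (abs_nonneg _) (Real.sqrt_nonneg _)
  -- denominator lower bound
  have hnear₀ : ∃ j, |(k₀ n:ℝ)/n - a j| < ds := ⟨j₀, lt_of_le_of_lt hk₀abs h1nds⟩
  obtain ⟨hAn₀, hBn₀⟩ := hN₃ n (by omega) (k₀ n) hk₀n hnear₀
  have hBk₀ : |Bn n (k₀ n)| ≤ D := hBnbound (k₀ n) hk₀n hnear₀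
  set L : ℝ := (n:ℝ) * (M - ε/4) - Cs * Real.log n - Real.sqrt n * D with hLdef
  have hden : Real.exp L ≤ ∑ l ∈ Finset.range (n+1),
      Real.exp ((n:ℝ) * An n l + (n:ℝ)*σ n * Bn n l) := by
    have hmem : k₀ n ∈ Finset.range (n+1) := Finset.mem_range.mpr (by omega)
    refine le_trans ?_ (Finset.single_le_sum (fun i _ => (Real.exp_pos _).le) hmem)
    apply Real.exp_le_exp.mpr
    have hA4 : M - ε/4 < A ((k₀ n:ℝ)/n) := hN₄ n (by omega)
    have h5 : A ((k₀ n:ℝ)/n) - Cs * Real.log n / n ≤ An n (k₀ n) := by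
      have := (abs_le.mp hAn₀).1
      linarith
    have h7 : (n:ℝ) * (A ((k₀ n:ℝ)/n) - Cs * Real.log n / n) ≤ (n:ℝ) * An n (k₀ n) :=
      mul_le_mul_of_nonneg_left h5 hn0.le
    have h10 : (n:ℝ) * (A ((k₀ n:ℝ)/n) - Cs * Real.log n / n)
        = (n:ℝ) * A ((k₀ n:ℝ)/n) - Cs * Real.log n := by
      field_simp
    have h9 : (n:ℝ) * (M - ε/4) ≤ (n:ℝ) * A ((k₀ n:ℝ)/n) :=
      mul_le_mul_of_nonneg_left hA4.le hn0.le
    have h11 : -(Real.sqrt n * D) ≤ (n:ℝ) * σ n * Bn n (k₀ n) := by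
      have h12 := hσB _ hBk₀
      linarith [(abs_le.mp h12).1]
    have h13 : (n:ℝ)*(M - ε/4) - Cs*Real.log n ≤ (n:ℝ) * An n (k₀ n) := by
      nlinarith [h7, h10, h9]
    rw [hLdef]
    nlinarith [h13, h11, add_le_add h13 h11]
  -- numerator upper bound for far-away k
  set U : ℝ := (n:ℝ) * (M - ε) + Cs * Real.log n + Real.sqrt n * D with hUdef
  have hnum : ∀ k, k ≤ n → (∀ j, δ < |(k:ℝ)/n - a j|) →
      (n:ℝ) * An n k + (n:ℝ)*σ n * Bn n k ≤ U := by
    intro k hk hkfar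
    have hkIcc : (k:ℝ)/n ∈ Set.Icc (0:ℝ) 1 :=
      ⟨by positivity, by rw [div_le_one hn0]; exact_mod_cast hk⟩
    have hσBk : (n:ℝ) * σ n * Bn n k ≤ Real.sqrt n * D := by
      by_cases hnear : ∃ j, |(k:ℝ)/n - a j| < ds
      · exact le_trans (le_abs_self _) (hσB _ (hBnbound k hk hnear))
      · push_neg at hnear
        have hBk : |Bn n k| ≤ Cs := (hN₂ n (by omega) k hk hnear).2
        exact le_trans (le_abs_self _) (hσB _ (le_trans hBk hCsD))
    have hAnk : (n:ℝ) * An n k ≤ (n:ℝ) * (M - ε) + Cs * Real.log n := by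
      by_cases hnear : ∃ j, |(k:ℝ)/n - a j| < ds
      · obtain ⟨hAnk', _⟩ := hN₃ n (by omega) k hk hnear
        have hKk : (k:ℝ)/n ∈ K := ⟨hkIcc, fun j => (hkfar j).le⟩
        have h1 : An n k ≤ (M - ε) + Cs * Real.log n / n := by
          have h2 := (abs_le.mp hAnk').2
          linarith [hKbound _ hKk]
        have h3 := mul_le_mul_of_nonneg_left h1 hn0.le
        have h4 : (n:ℝ) * ((M - ε) + Cs * Real.log n / n)
            = (n:ℝ)*(M-ε) + Cs * Real.log n := by
          field_simp
        linarith
      · push_neg at hnear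
        have h1 : An n k ≤ M - es := (hN₂ n (by omega) k hk hnear).1
        have h2 : An n k ≤ M - ε := by linarith
        have h3 := mul_le_mul_of_nonneg_left h2 hn0.le
        have h4 : 0 ≤ Cs * Real.log n := mul_nonneg hCs.le hlogn
        linarith
    rw [hUdef]
    linarith
  -- per-term bound
  have hterm : ∀ k ∈ Finset.range (n+1),
      (if ∀ j, δ < |(k:ℝ)/n - a j| then P n k else 0) ≤ Real.exp (U - L) := by
    intro k hkmem
    by_cases hcond : ∀ j, δ < |(k:ℝ)/n - a j|
    · rw [if_pos hcond, hP n k]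
      have hk : k ≤ n := Nat.lt_succ_iff.mp (Finset.mem_range.mp hkmem)
      have h1 : Real.exp ((n:ℝ)*An n k + (n:ℝ)*σ n*Bn n k) ≤ Real.exp U :=
        Real.exp_le_exp.mpr (hnum k hk hcond)
      calc Real.exp ((n:ℝ)*An n k + (n:ℝ)*σ n*Bn n k) /
            ∑ l ∈ Finset.range (n + 1),
              Real.exp ((n : ℝ) * An n l + (n : ℝ) * σ n * Bn n l)
          ≤ Real.exp U / Real.exp L :=
            div_le_div₀ (Real.exp_pos U).le h1 (Real.exp_pos L) hden
        _ = Real.exp (U - L) := (Real.exp_sub U L).symm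
    · rw [if_neg hcond]
      positivity
  have hsum : (∑ k ∈ Finset.range (n+1),
      if ∀ j, δ < |(k:ℝ)/n - a j| then P n k else 0) ≤ ((n:ℝ)+1) * Real.exp (U - L) := by
    calc (∑ k ∈ Finset.range (n+1), if ∀ j, δ < |(k:ℝ)/n - a j| then P n k else 0)
        ≤ (Finset.range (n+1)).card • Real.exp (U - L) :=
          Finset.sum_le_card_nsmul _ _ _ hterm
      _ = ((n:ℝ)+1) * Real.exp (U - L) := by
          rw [Finset.card_range, nsmul_eq_mul]
          push_cast
          ring
  refine le_trans hsum ?_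
  rw [← Real.exp_log (by positivity : (0:ℝ) < (n:ℝ)+1), ← Real.exp_add]
  apply Real.exp_le_exp.mpr
  -- final asymptotic inequality
  have hss : Real.sqrt n * Real.sqrt n = (n:ℝ) := Real.mul_self_sqrt hn0.le
  have hs0 : (0:ℝ) ≤ Real.sqrt n := Real.sqrt_nonneg _
  have hs1 : (1:ℝ) ≤ Real.sqrt n := by
    rw [show (1:ℝ) = Real.sqrt 1 from (Real.sqrt_one).symm]
    exact Real.sqrt_le_sqrt hn1R
  have hlog1 : Real.log n ≤ 2 * Real.sqrt n := by
    have h1 := Real.log_le_rpow_div (x := (n:ℝ)) (ε := 1/2) hn0.le (by norm_num)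
    have h2 : (n:ℝ)^((1:ℝ)/2)/(1/2) = 2 * Real.sqrt n := by
      rw [Real.sqrt_eq_rpow]; ring
    rw [h2] at h1
    exact h1
  have hsn1 : Real.sqrt ((n:ℝ)+1) ≤ Real.sqrt n + 1 := by
    rw [show Real.sqrt n + 1 = Real.sqrt ((Real.sqrt n + 1)^2) from
      (Real.sqrt_sq (by positivity)).symm]
    apply Real.sqrt_le_sqrt
    nlinarith [Real.sq_sqrt hn0.le]
  have hlogn1 : Real.log ((n:ℝ)+1) ≤ 4 * Real.sqrt n := by
    have h1 := Real.log_le_rpow_div (x := (n:ℝ)+1) (ε := 1/2) (by positivity) (by norm_num)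
    have h2 : ((n:ℝ)+1)^((1:ℝ)/2)/(1/2) = 2 * Real.sqrt ((n:ℝ)+1) := by
      rw [Real.sqrt_eq_rpow]; ring
    rw [h2] at h1
    linarith
  have hsqE : 8*E/(5*ε) ≤ Real.sqrt n := by
    rw [show Real.sqrt n = Real.sqrt (n:ℝ) from rfl]
    rw [Real.le_sqrt (by positivity) hn0.le]
    have h1 : ((8*E/(5*ε))^2 : ℝ) ≤ (⌈((8*E/(5*ε))^2 : ℝ)⌉₊ : ℝ) := Nat.le_ceil _
    have h2 : (⌈((8*E/(5*ε))^2 : ℝ)⌉₊ : ℝ) ≤ (n:ℝ) := by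
      exact_mod_cast (by omega : ⌈((8*E/(5*ε))^2 : ℝ)⌉₊ ≤ n)
    linarith
  have hkey : E * Real.sqrt n ≤ (5*ε/8) * (n:ℝ) := by
    have h1 : E ≤ (5*ε/8) * Real.sqrt n := by
      have h2 := mul_le_mul_of_nonneg_left hsqE (by positivity : (0:ℝ) ≤ 5*ε/8)
      have h3 : (5*ε/8) * (8*E/(5*ε)) = E := by field_simp
      linarith
    calc E * Real.sqrt n ≤ ((5*ε/8) * Real.sqrt n) * Real.sqrt n :=
          mul_le_mul_of_nonneg_right h1 hs0
      _ = (5*ε/8) * (n:ℝ) := by rw [mul_assoc, hss]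
  have hcs2 : 2*Cs*Real.log n ≤ 2*Cs*(2*Real.sqrt n) :=
    mul_le_mul_of_nonneg_left hlog1 (by positivity)
  rw [hUdef, hLdef, hEdef] at *
  nlinarith [hkey, hcs2, hlogn1]
end

section
/- Under Assumptions (A1)–(A3), with J_1 = {j ∈ J : B(a_j) = max_{k∈J} B(a_k)}, for every δ ∈ (0, δ_*) there exists a constant c > 0 such that for all sufficiently large n, P[ |X_n/n − a_j| > δ for all j ∈ J_1 ] ≤ exp(−c n σ_{*,n}). -/
open Classical Filter MeasureTheory

set_option maxHeartbeats 1000000 in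
/-- Theorem 2, second concentration inequality \eqref{8}: under (A1)–(A3), for every
`δ ∈ (0, δ_*)` there is `c > 0` with
`P[|X_n/n − a_j| > δ for all j ∈ J₁] ≤ exp(−c n σ_{*,n})` for all large `n`. -/
theorem concentration_J1
    (mstar : ℕ) (hmstar : 1 ≤ mstar)
    (J : Type) [Fintype J] [Nonempty J]
    (a : J → ℝ) (m : J → ℕ) (hm1 : ∀ j, 1 ≤ m j)
    (An Bn : ℕ → ℕ → ℝ)
    (A B : ℝ → ℝ)
    (hA : ContDiff ℝ (2 * mstar + 1) A)
    (hB : ContDiff ℝ 2 B)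
    (es ds Cs : ℝ) (hes : 0 < es) (hds : 0 < ds) (hCs : 0 < Cs)
    -- the perturbed model: σ_{*,n} and the law of X_n
    (σ : ℕ → ℝ) (hσ : ∀ n : ℕ, σ n = (n : ℝ) ^ ((-1 : ℝ) + 1 / (2 * (mstar : ℝ))))
    (P : ℕ → ℕ → ℝ)
    (hP : ∀ n k : ℕ, P n k =
      Real.exp ((n : ℝ) * An n k + (n : ℝ) * σ n * Bn n k) /
        ∑ l ∈ Finset.range (n + 1),
          Real.exp ((n : ℝ) * An n l + (n : ℝ) * σ n * Bn n l))
    -- (A1)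
    (ha : ∀ j, a j ∈ Set.Ioo (0 : ℝ) 1)
    (hmaximizers : ∀ x ∈ Set.Icc (0 : ℝ) 1,
      ((∀ y ∈ Set.Icc (0 : ℝ) 1, A y ≤ A x) ↔ ∃ j, a j = x))
    (hmle : ∀ j, m j ≤ mstar) (hmtop : ∃ j, m j = mstar)
    (hder : ∀ j, ∀ k : ℕ, 1 ≤ k → k ≤ 2 * m j - 1 → iteratedDeriv k A (a j) = 0)
    (hneg : ∀ j, ∀ x : ℝ, |x - a j| ≤ ds → iteratedDeriv (2 * m j) A x < 0)
    (hdisj : ∀ i j : J, i ≠ j →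
      Disjoint (Set.Ioo (a i - ds) (a i + ds)) (Set.Ioo (a j - ds) (a j + ds)))
    (hsubset : ∀ j, Set.Ioo (a j - ds) (a j + ds) ⊆ Set.Ioo (0 : ℝ) 1)
    -- (A2)
    (hA2 : ∃ N : ℕ, ∀ n ≥ N, ∀ k ≤ n, (∀ j, ds ≤ |(k : ℝ) / n - a j|) →
      An n k ≤ sSup (A '' Set.Icc 0 1) - es ∧ |Bn n k| ≤ Cs)
    -- (A3i)
    (hA3i : ∃ N : ℕ, ∀ n ≥ N, ∀ k ≤ n, (∃ j, |(k : ℝ) / n - a j| < ds) →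
      |An n k - A ((k : ℝ) / n)| ≤ Cs * Real.log n / n ∧
      |Bn n k - B ((k : ℝ) / n)| ≤ Cs / n)
    -- (A3ii)
    (hA3ii : ∃ N : ℕ, ∀ n ≥ N, ∀ k ≤ n, ∀ l ≤ n,
      (∃ j, |(k : ℝ) / n - a j| < ds ∧ |(l : ℝ) / n - a j| < ds) →
      |(An n k - An n l) - (A ((k : ℝ) / n) - A ((l : ℝ) / n))| ≤
        Cs * |(k : ℝ) - (l : ℝ)| / (n : ℝ) ^ 2)
    -- the sets J₁ and J₂
    (J1 J2 : J → Prop)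
    (hJ1 : ∀ j, J1 j ↔ ∀ k, B (a k) ≤ B (a j))
    (hJ2 : ∀ j, J2 j ↔ (J1 j ∧ ∀ k, J1 k → m k ≤ m j))
    :
    ∀ δ : ℝ, 0 < δ → δ < ds →
      ∃ c : ℝ, 0 < c ∧ ∃ N : ℕ, ∀ n ≥ N,
        (∑ k ∈ Finset.range (n + 1),
            if ∀ j, J1 j → δ < |(k : ℝ) / n - a j| then P n k else 0) ≤
          Real.exp (-c * n * σ n) := by
  intro δ hδ0 hδds
  obtain ⟨N2, hN2⟩ := hA2
  obtain ⟨N3, hN3⟩ := hA3i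
  clear hA3ii hJ2 hder hneg hdisj hsubset hmle hmtop hm1
  set Astar := sSup (A '' Set.Icc 0 1) with hAstar_def
  have hAcont : Continuous A := hA.continuous
  have hBcont : Continuous B := hB.continuous
  have hbdd : BddAbove (A '' Set.Icc (0:ℝ) 1) := (isCompact_Icc.image hAcont).bddAbove
  have hle : ∀ x ∈ Set.Icc (0:ℝ) 1, A x ≤ Astar := fun x hx => le_csSup hbdd ⟨x, hx, rfl⟩
  have haIcc : ∀ j, a j ∈ Set.Icc (0:ℝ) 1 := fun j => ⟨(ha j).1.le, (ha j).2.le⟩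
  have hAa : ∀ j, A (a j) = Astar := by
    intro j
    have hmax := (hmaximizers (a j) (haIcc j)).mpr ⟨j, rfl⟩
    refine le_antisymm (hle _ (haIcc j)) (csSup_le ⟨A (a j), ⟨a j, haIcc j, rfl⟩⟩ ?_)
    rintro y ⟨x, hx, rfl⟩
    exact hmax x hx
  -- a maximizer of B ∘ a
  obtain ⟨j1, -, hj1⟩ := Finset.exists_max_image Finset.univ (fun j => B (a j))
    ⟨Classical.arbitrary J, Finset.mem_univ _⟩
  have hj1' : ∀ k, B (a k) ≤ B (a j1) := fun k => hj1 k (Finset.mem_univ k)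
  have hJ1j1 : J1 j1 := (hJ1 j1).mpr hj1'
  -- the gap γ
  set g : J → ℝ := fun j => if J1 j then 1 else B (a j1) - B (a j) with hg
  have hgpos : ∀ j, 0 < g j := by
    intro j; by_cases h : J1 j
    · simp [hg, h]
    · simp only [hg, h, if_false]
      have h2 : ¬ ∀ k, B (a k) ≤ B (a j) := fun hc => h ((hJ1 j).mpr hc)
      push_neg at h2
      obtain ⟨k, hk⟩ := h2
      linarith [hj1' k]
  set γ := min 1 (Finset.univ.inf' Finset.univ_nonempty g) with hγdef
  have hγpos : 0 < γ :=
    lt_min one_pos ((Finset.lt_inf'_iff _).mpr fun j _ => hgpos j)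
  have hγ1 : γ ≤ 1 := min_le_left _ _
  have hγgap : ∀ j, ¬ J1 j → B (a j) ≤ B (a j1) - γ := by
    intro j hj
    have h1 : γ ≤ g j :=
      le_trans (min_le_right _ _) (Finset.inf'_le _ (Finset.mem_univ j))
    simp only [hg, hj, if_false] at h1
    linarith
  -- the radius r (continuity of B near each a j)
  have hrj : ∀ j : J, ∃ rj : ℝ, 0 < rj ∧ ∀ x : ℝ, |x - a j| < rj → |B x - B (a j)| < γ/8 := by
    intro j
    obtain ⟨rj, hrj0, hrjP⟩ := Metric.continuousAt_iff.mp (hBcont.continuousAt (x := a j))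
      (γ/8) (by positivity)
    refine ⟨rj, hrj0, fun x hx => ?_⟩
    have := hrjP (x := x) (by rwa [Real.dist_eq])
    rwa [Real.dist_eq] at this
  choose rj hrj0 hrjP using hrj
  set r := (min δ (Finset.univ.inf' Finset.univ_nonempty rj)) / 2 with hrdef
  have hrmin : 0 < min δ (Finset.univ.inf' Finset.univ_nonempty rj) :=
    lt_min hδ0 ((Finset.lt_inf'_iff _).mpr fun j _ => hrj0 j)
  have hrpos : 0 < r := by positivity
  have hrδ : r ≤ δ := by
    have := min_le_left δ (Finset.univ.inf' Finset.univ_nonempty rj)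
    simp only [hrdef]; linarith
  have hrB : ∀ j, ∀ x : ℝ, |x - a j| ≤ r → |B x - B (a j)| < γ/8 := by
    intro j x hx
    apply hrjP j
    have h2 : min δ (Finset.univ.inf' Finset.univ_nonempty rj) ≤ rj j :=
      le_trans (min_le_right _ _) (Finset.inf'_le _ (Finset.mem_univ j))
    simp only [hrdef] at hx
    linarith
  -- bound M for |B| on [0,1]
  obtain ⟨M, hM⟩ := isCompact_Icc.exists_bound_of_continuousOn
    (hBcont.continuousOn : ContinuousOn B (Set.Icc (0:ℝ) 1))
  have hMx : ∀ x ∈ Set.Icc (0:ℝ) 1, |B x| ≤ M := fun x hx => by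
    simpa [Real.norm_eq_abs] using hM x hx
  have hM0 : 0 ≤ M := le_trans (abs_nonneg _) (hMx 0 (by norm_num))
  -- Lipschitz constant L for A on [-1, 2]
  have hAdiff : Differentiable ℝ A := hA.differentiable (by simp)
  have hA'cont : Continuous (deriv A) :=
    hA.continuous_deriv (by exact_mod_cast Nat.le_add_left 1 (2*mstar))
  obtain ⟨L, hL⟩ := (isCompact_Icc (a := (-1:ℝ)) (b := 2)).exists_bound_of_continuousOn
    hA'cont.continuousOn
  have hL' : ∀ x ∈ Set.Icc (-1:ℝ) 2, |deriv A x| ≤ L := fun x hx => by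
    simpa [Real.norm_eq_abs] using hL x hx
  have hL0 : 0 ≤ L := le_trans (abs_nonneg _) (hL' 0 (by norm_num))
  have hLip : ∀ x ∈ Set.Icc (-1:ℝ) 2, ∀ y ∈ Set.Icc (-1:ℝ) 2, |A y - A x| ≤ L * |y - x| := by
    intro x hx y hy
    have := (convex_Icc (-1:ℝ) 2).norm_image_sub_le_of_norm_deriv_le
      (fun z _ => hAdiff z)
      (fun z hz => le_of_eq_of_le (Real.norm_eq_abs _) (hL' z hz)) hx hy
    simpa [Real.norm_eq_abs] using this
  -- the gap η away from the maximizers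
  set K := {x ∈ Set.Icc (0:ℝ) 1 | ∀ j, r ≤ |x - a j|} with hKdef
  have hηex : ∃ η : ℝ, 0 < η ∧ ∀ x ∈ K, A x ≤ Astar - η := by
    by_cases hne : K.Nonempty
    · have hKclosed : IsClosed K := by
        have hKeq : K = Set.Icc 0 1 ∩ ⋂ j, {x | r ≤ |x - a j|} := by
          ext x
          simp only [hKdef, Set.mem_setOf_eq, Set.mem_inter_iff, Set.mem_iInter, Set.sep_setOf]
        rw [hKeq]
        exact isClosed_Icc.inter (isClosed_iInter fun j =>
          isClosed_le continuous_const ((continuous_id.sub continuous_const).abs))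
      have hKcomp : IsCompact K :=
        isCompact_Icc.of_isClosed_subset hKclosed (fun x hx => hx.1)
      obtain ⟨x0, hx0K, hx0max⟩ := hKcomp.exists_isMaxOn hne hAcont.continuousOn
      have hlt : A x0 < Astar := by
        rcases lt_or_ge (A x0) Astar with h | h
        · exact h
        · exfalso
          have hmax : ∀ y ∈ Set.Icc (0:ℝ) 1, A y ≤ A x0 := fun y hy =>
            le_trans (hle y hy) h
          obtain ⟨j, hj⟩ := (hmaximizers x0 hx0K.1).mp hmax
          have h2 := hx0K.2 j
          rw [hj] at h2
          simp only [sub_self, abs_zero] at h2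
          linarith
      exact ⟨Astar - A x0, by linarith, fun x hx => by
        have := hx0max hx; simp only [Set.mem_setOf_eq] at this ⊢; linarith⟩
    · exact ⟨1, one_pos, fun x hx => absurd ⟨x, hx⟩ hne⟩
  obtain ⟨η, hηpos, hηK⟩ := hηex
  set ε₀ := min es η with hε₀def
  have hε₀pos : 0 < ε₀ := lt_min hes hηpos
  set C₃ := M + Cs + |B (a j1)| + γ with hC₃def
  have hC₃pos : 0 < C₃ := by positivity
  -- the exponent α
  set α := 1 / (2 * (mstar : ℝ)) with hαdef
  have hmstarR : (1:ℝ) ≤ (mstar:ℝ) := by exact_mod_cast hmstar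
  have hα : 0 < α := by positivity
  have hα2 : α ≤ 1/2 := by
    rw [hαdef, div_le_div_iff₀ (by positivity) (by norm_num)]
    linarith
  have hsσ : ∀ n : ℕ, 1 ≤ n → (n:ℝ) * σ n = (n:ℝ) ^ α := by
    intro n hn
    have hnp : (0:ℝ) < n := by exact_mod_cast hn
    rw [hσ]
    calc (n:ℝ) * (n:ℝ) ^ ((-1:ℝ) + 1 / (2 * (mstar:ℝ)))
        = (n:ℝ) ^ (1:ℝ) * (n:ℝ) ^ ((-1:ℝ) + 1 / (2 * (mstar:ℝ))) := by rw [Real.rpow_one]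
      _ = (n:ℝ) ^ ((1:ℝ) + ((-1:ℝ) + 1 / (2 * (mstar:ℝ)))) := (Real.rpow_add hnp _ _).symm
      _ = (n:ℝ) ^ α := by congr 1; rw [hαdef]; ring
  -- generic asymptotic helper
  have key : ∀ C₁ C₂ ε : ℝ, 0 < ε → ∀ᶠ x : ℝ in atTop, C₁ * Real.log x + C₂ ≤ ε * x ^ α := by
    intro C₁ C₂ ε hε
    have h1 := (isLittleO_log_rpow_atTop hα).def (show (0:ℝ) < ε/(2*(|C₁|+1)) by positivity)
    have h2 : Tendsto (fun x : ℝ => x ^ α) atTop atTop := tendsto_rpow_atTop hα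
    filter_upwards [h1, eventually_ge_atTop (1:ℝ),
      h2.eventually_ge_atTop (2*(|C₁|+|C₂|+1)/ε)] with x hx1 hx2 hx3
    have hlog : 0 ≤ Real.log x := Real.log_nonneg hx2
    have hxα : 0 ≤ x ^ α := Real.rpow_nonneg (by linarith) α
    rw [Real.norm_eq_abs, Real.norm_eq_abs, abs_of_nonneg hlog, abs_of_nonneg hxα] at hx1
    have hC1 : C₁ * Real.log x ≤ (ε/2) * x ^ α := by
      have e1 : C₁ * Real.log x ≤ |C₁| * Real.log x :=
        mul_le_mul_of_nonneg_right (le_abs_self C₁) hlog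
      have hne : |C₁| + 1 ≠ 0 := by positivity
      have e2 : |C₁| * Real.log x ≤ (|C₁|+1) * (ε/(2*(|C₁|+1)) * x ^ α) := by
        have := mul_le_mul_of_nonneg_left hx1 (by positivity : (0:ℝ) ≤ |C₁|+1)
        have h7 : |C₁| * Real.log x ≤ (|C₁|+1) * Real.log x :=
          mul_le_mul_of_nonneg_right (by linarith) hlog
        linarith
      have e3 : (|C₁|+1) * (ε/(2*(|C₁|+1)) * x ^ α) = (ε/2) * x ^ α := by
        field_simp <;> ring
      linarith
    have hC2 : C₂ ≤ (ε/2) * x ^ α := by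
      have h4 : 2*(|C₁|+|C₂|+1)/ε * (ε/2) ≤ x ^ α * (ε/2) :=
        mul_le_mul_of_nonneg_right hx3 (le_of_lt (half_pos hε))
      have h5 : 2*(|C₁|+|C₂|+1)/ε * (ε/2) = |C₁|+|C₂|+1 := by
        have hεne : ε ≠ 0 := ne_of_gt hε
        field_simp <;> ring
      have h6 := le_abs_self C₂
      have h7 := abs_nonneg C₁
      nlinarith
    linarith
  -- σ n → 0
  have htend : Tendsto (fun n : ℕ => σ n) atTop (nhds 0) := by
    have h1 : Tendsto (fun x : ℝ => x ^ ((-1:ℝ) + 1 / (2 * (mstar:ℝ)))) atTop (nhds 0) := by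
      have h2 := tendsto_rpow_neg_atTop (y := 1 - α) (by linarith)
      refine h2.congr' ?_
      filter_upwards with x
      congr 1
      rw [hαdef]; ring
    have h3 := h1.comp tendsto_natCast_atTop_atTop
    refine h3.congr fun n => ?_
    simp only [Function.comp]
    rw [hσ]
  -- collect all eventual facts
  have hE2 : ∀ᶠ n : ℕ in atTop,
      2*Cs*Real.log (n:ℝ) + (L + 2*Cs) ≤ γ/2 * (n:ℝ) ^ α :=
    tendsto_natCast_atTop_atTop.eventually (key (2*Cs) (L + 2*Cs) (γ/2) (by positivity))
  have hE3 : ∀ᶠ n : ℕ in atTop,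
      2*Cs*Real.log (n:ℝ) + (L + Cs) ≤ ε₀/2 * (n:ℝ) := by
    have h1 := key (2*Cs) (L + Cs) (ε₀/2) (by positivity)
    have h2 : ∀ᶠ x : ℝ in atTop, 2*Cs*Real.log x + (L + Cs) ≤ ε₀/2 * x := by
      filter_upwards [h1, eventually_ge_atTop (1:ℝ)] with x hx1 hx2
      have h3 : x ^ α ≤ x := by
        calc x ^ α ≤ x ^ (1:ℝ) := Real.rpow_le_rpow_of_exponent_le hx2 (by linarith)
          _ = x := Real.rpow_one x
      have h4 : ε₀/2 * x ^ α ≤ ε₀/2 * x :=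
        mul_le_mul_of_nonneg_left h3 (by positivity)
      linarith
    exact tendsto_natCast_atTop_atTop.eventually h2
  have hE5 : ∀ᶠ n : ℕ in atTop, σ n * C₃ ≤ ε₀/2 := by
    have h1 : ∀ᶠ n : ℕ in atTop, σ n < ε₀/(2*C₃) :=
      htend.eventually_lt_const (by positivity)
    filter_upwards [h1] with n hn
    have h2 : σ n * C₃ ≤ ε₀/(2*C₃) * C₃ := mul_le_mul_of_nonneg_right hn.le hC₃pos.le
    have h3 : ε₀/(2*C₃) * C₃ = ε₀/2 := by
      have hne : C₃ ≠ 0 := ne_of_gt hC₃pos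
      field_simp <;> ring
    linarith
  have hE6 : ∀ᶠ n : ℕ in atTop, Real.log ((n:ℝ)+1) ≤ γ/8 * (n:ℝ) ^ α := by
    have h1 : ∀ᶠ x : ℝ in atTop, Real.log (x+1) ≤ γ/8 * x ^ α := by
      filter_upwards [key 2 0 (γ/8) (by positivity), eventually_ge_atTop (2:ℝ)] with x hx1 hx2
      have h3 : x + 1 ≤ x * x := by nlinarith
      have h4 : Real.log (x+1) ≤ Real.log (x*x) :=
        Real.log_le_log (by linarith) h3
      have h5 : Real.log (x*x) = Real.log x + Real.log x :=
        Real.log_mul (by linarith) (by linarith)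
      linarith
    exact tendsto_natCast_atTop_atTop.eventually h1
  have hE1 : ∀ᶠ n : ℕ in atTop, 1/(n:ℝ) < r :=
    tendsto_one_div_atTop_nhds_zero_nat.eventually_lt_const hrpos
  obtain ⟨N, hN⟩ := Filter.eventually_atTop.mp
    ((((((hE1.and hE2).and hE3).and hE5).and hE6).and
      ((eventually_ge_atTop 1).and ((eventually_ge_atTop N2).and (eventually_ge_atTop N3)))))
  refine ⟨γ/8, by linarith, N, ?_⟩
  intro n hn
  obtain ⟨⟨⟨⟨⟨h1r, hF2⟩, hF3⟩, hF5⟩, hF6⟩, hn1, hnN2, hnN3⟩ := hN n hn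
  have hnpos : (0:ℝ) < n := by exact_mod_cast hn1
  have hσpos : 0 < σ n := by rw [hσ]; exact Real.rpow_pos_of_pos hnpos _
  have hσ1 : σ n ≤ 1 := by
    rw [hσ]
    apply Real.rpow_le_one_of_one_le_of_nonpos (by exact_mod_cast hn1)
    have : 1 / (2 * (mstar:ℝ)) ≤ 1/2 := hα2
    linarith
  have hsα : (n:ℝ) * σ n = (n:ℝ) ^ α := hsσ n hn1
  have hspos : 0 < (n:ℝ) * σ n := by positivity
  -- the reference point k0 near a j1
  set k0 := ⌈(n:ℝ) * a j1⌉₊ with hk0def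
  have hk0n : k0 ≤ n := by
    rw [hk0def, Nat.ceil_le]
    exact mul_le_of_le_one_right hnpos.le (ha j1).2.le
  have hk0dist : |(k0:ℝ)/n - a j1| ≤ 1/n := by
    have h1 : (n:ℝ) * a j1 ≤ k0 := Nat.le_ceil _
    have h2 : (k0:ℝ) < (n:ℝ) * a j1 + 1 :=
      Nat.ceil_lt_add_one (mul_nonneg hnpos.le (ha j1).1.le)
    have h3 : (k0:ℝ)/n - a j1 = ((k0:ℝ) - (n:ℝ) * a j1)/n := by field_simp
    rw [h3, abs_div, abs_of_pos hnpos]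
    have h4 : |(k0:ℝ) - (n:ℝ) * a j1| ≤ 1 := by
      rw [abs_le]; constructor <;> linarith
    gcongr
  have hk0near : |(k0:ℝ)/n - a j1| < ds :=
    lt_of_le_of_lt hk0dist (lt_trans h1r (by linarith))
  have hA3k0 := hN3 n hnN3 k0 hk0n ⟨j1, hk0near⟩
  have hk0Icc : (k0:ℝ)/n ∈ Set.Icc (0:ℝ) 1 :=
    ⟨by positivity, by rw [div_le_one hnpos]; exact_mod_cast hk0n⟩
  have hIcc12 : ∀ x : ℝ, x ∈ Set.Icc (0:ℝ) 1 → x ∈ Set.Icc (-1:ℝ) 2 := by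
    intro x hx; exact ⟨by linarith [hx.1], by linarith [hx.2]⟩
  have hAk0 : Astar - L * (1/n) ≤ A ((k0:ℝ)/n) := by
    have h1 := hLip (a j1) (hIcc12 _ (haIcc j1)) ((k0:ℝ)/n) (hIcc12 _ hk0Icc)
    have h2 : L * |(k0:ℝ)/n - a j1| ≤ L * (1/n) :=
      mul_le_mul_of_nonneg_left hk0dist hL0
    have h3 := (abs_le.mp (le_trans h1 h2)).1
    rw [hAa j1] at h3
    linarith
  have hBk0 : B (a j1) - γ/8 ≤ B ((k0:ℝ)/n) := by
    have h1 := (abs_le.mp (hrB j1 ((k0:ℝ)/n) (le_trans hk0dist h1r.le)).le).1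
    linarith
  -- lower bound on the k0 term
  have hT0 : (n:ℝ)*Astar - L - Cs*Real.log n + (n:ℝ)*σ n * B (a j1)
        - γ/8 * ((n:ℝ)*σ n) - σ n * Cs
      ≤ (n:ℝ) * An n k0 + (n:ℝ) * σ n * Bn n k0 := by
    have e1 : (n:ℝ)*Astar - L - Cs*Real.log n ≤ (n:ℝ) * An n k0 := by
      have h1 : Astar - L * (1/n) - Cs*Real.log n/n ≤ An n k0 := by
        linarith [(abs_le.mp hA3k0.1).1]
      have h2 := mul_le_mul_of_nonneg_left h1 hnpos.le
      have h3 : (n:ℝ) * (Astar - L * (1/n) - Cs*Real.log n/n)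
          = (n:ℝ)*Astar - L - Cs*Real.log n := by field_simp <;> ring
      rw [h3] at h2; linarith
    have e2 : (n:ℝ)*σ n * B (a j1) - γ/8 * ((n:ℝ)*σ n) - σ n * Cs
        ≤ (n:ℝ)*σ n * Bn n k0 := by
      have h1 : B (a j1) - γ/8 - Cs/n ≤ Bn n k0 := by
        linarith [(abs_le.mp hA3k0.2).1]
      have h2 := mul_le_mul_of_nonneg_left h1 hspos.le
      have h3 : (n:ℝ)*σ n * (B (a j1) - γ/8 - Cs/n)
          = (n:ℝ)*σ n * B (a j1) - γ/8 * ((n:ℝ)*σ n) - σ n * Cs := by field_simp <;> ring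
      rw [h3] at h2; linarith
    linarith
  -- denominator lower bound
  have hZ : Real.exp ((n:ℝ) * An n k0 + (n:ℝ) * σ n * Bn n k0)
      ≤ ∑ l ∈ Finset.range (n+1),
          Real.exp ((n:ℝ) * An n l + (n:ℝ) * σ n * Bn n l) :=
    Finset.single_le_sum
      (f := fun l => Real.exp ((n:ℝ) * An n l + (n:ℝ) * σ n * Bn n l))
      (fun l _ => (Real.exp_pos _).le)
      (Finset.mem_range.mpr (Nat.lt_succ_of_le hk0n))
  have hZpos : 0 < ∑ l ∈ Finset.range (n+1),
      Real.exp ((n:ℝ) * An n l + (n:ℝ) * σ n * Bn n l) :=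
    lt_of_lt_of_le (Real.exp_pos _) hZ
  -- the per-term bound
  have hkey : ∀ k ≤ n, (∀ j, J1 j → δ < |(k:ℝ)/n - a j|) →
      P n k ≤ Real.exp (-(γ/4) * ((n:ℝ)*σ n)) := by
    intro k hkn hbad
    have hkIcc : (k:ℝ)/n ∈ Set.Icc (0:ℝ) 1 :=
      ⟨by positivity, by rw [div_le_one hnpos]; exact_mod_cast hkn⟩
    have hTk : (n:ℝ)*An n k + (n:ℝ)*σ n*Bn n k
        ≤ ((n:ℝ)*An n k0 + (n:ℝ)*σ n*Bn n k0) - γ/4 * ((n:ℝ)*σ n) := by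
      by_cases hcase : ∃ j, ¬ J1 j ∧ |(k:ℝ)/n - a j| ≤ r
      · -- case (i): close to a non-J1 maximizer
        obtain ⟨j, hjn1, hjr⟩ := hcase
        have hA3k := hN3 n hnN3 k hkn ⟨j, lt_of_le_of_lt hjr (by linarith)⟩
        have hAk : A ((k:ℝ)/n) ≤ Astar := hle _ hkIcc
        have hBk : B ((k:ℝ)/n) ≤ B (a j1) - 7/8*γ := by
          have h1 := (abs_le.mp (hrB j ((k:ℝ)/n) hjr).le).2
          have h2 := hγgap j hjn1
          linarith
        have e1 : (n:ℝ)*An n k ≤ (n:ℝ)*Astar + Cs*Real.log n := by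
          have h1 : An n k ≤ Astar + Cs*Real.log n/n := by
            linarith [(abs_le.mp hA3k.1).2]
          have h2 := mul_le_mul_of_nonneg_left h1 hnpos.le
          have h3 : (n:ℝ) * (Astar + Cs*Real.log n/n)
              = (n:ℝ)*Astar + Cs*Real.log n := by field_simp <;> ring
          rw [h3] at h2; linarith
        have e2 : (n:ℝ)*σ n*Bn n k
            ≤ (n:ℝ)*σ n * B (a j1) - 7/8*γ * ((n:ℝ)*σ n) + σ n * Cs := by
          have h1 : Bn n k ≤ B (a j1) - 7/8*γ + Cs/n := by
            linarith [(abs_le.mp hA3k.2).2]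
          have h2 := mul_le_mul_of_nonneg_left h1 hspos.le
          have h3 : (n:ℝ)*σ n * (B (a j1) - 7/8*γ + Cs/n)
              = (n:ℝ)*σ n * B (a j1) - 7/8*γ * ((n:ℝ)*σ n) + σ n * Cs := by
            field_simp <;> ring
          rw [h3] at h2; linarith
        have hσCs : σ n * Cs ≤ Cs := mul_le_of_le_one_left hCs.le hσ1
        rw [← hsα] at hF2
        linarith
      · -- case (ii): away from all relevant maximizers
        push_neg at hcase
        have hAnbound : An n k ≤ Astar - ε₀ + Cs*Real.log n/n := by
          have hlogn : 0 ≤ Real.log n := Real.log_nonneg (by exact_mod_cast hn1)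
          have hlt : 0 ≤ Cs*Real.log n/n := by positivity
          by_cases hfar : ∀ j, ds ≤ |(k:ℝ)/n - a j|
          · have h := hN2 n hnN2 k hkn hfar
            have hεes : ε₀ ≤ es := min_le_left _ _
            linarith [h.1]
          · push_neg at hfar
            have h := hN3 n hnN3 k hkn hfar
            have hKmem : (k:ℝ)/n ∈ K := by
              refine ⟨hkIcc, fun j => ?_⟩
              by_cases hj1 : J1 j
              · linarith [hbad j hj1, hrδ]
              · exact (hcase j hj1).le
            have hηb := hηK _ hKmem
            have hεη : ε₀ ≤ η := min_le_right _ _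
            linarith [(abs_le.mp h.1).2]
        have hBnbound : Bn n k ≤ M + Cs := by
          by_cases hfar : ∀ j, ds ≤ |(k:ℝ)/n - a j|
          · have h := hN2 n hnN2 k hkn hfar
            linarith [(abs_le.mp h.2).2, hM0, le_abs_self (Bn n k)]
          · push_neg at hfar
            have h := hN3 n hnN3 k hkn hfar
            have h2 := hMx _ hkIcc
            have h3 := (abs_le.mp h.2).2
            have h4 : Cs/n ≤ Cs := div_le_self hCs.le (by exact_mod_cast hn1)
            linarith [le_abs_self (B ((k:ℝ)/n))]
        have e1 : (n:ℝ)*An n k ≤ (n:ℝ)*Astar - (n:ℝ)*ε₀ + Cs*Real.log n := by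
          have h2 := mul_le_mul_of_nonneg_left hAnbound hnpos.le
          have h3 : (n:ℝ) * (Astar - ε₀ + Cs*Real.log n/n)
              = (n:ℝ)*Astar - (n:ℝ)*ε₀ + Cs*Real.log n := by field_simp <;> ring
          rw [h3] at h2; linarith
        have e2 : (n:ℝ)*σ n*Bn n k ≤ (n:ℝ)*σ n * (M + Cs) :=
          mul_le_mul_of_nonneg_left hBnbound hspos.le
        -- combine
        have hσCs : σ n * Cs ≤ Cs := mul_le_of_le_one_left hCs.le hσ1
        have hb1 : - B (a j1) ≤ |B (a j1)| := neg_le_abs _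
        have h5 : M + Cs - B (a j1) + γ/8 + γ/4 ≤ C₃ := by
          rw [hC₃def]; linarith
        have hcoef : (n:ℝ)*σ n * (M + Cs - B (a j1) + γ/8 + γ/4) ≤ (n:ℝ)*σ n * C₃ :=
          mul_le_mul_of_nonneg_left h5 hspos.le
        have hF5' : (n:ℝ)*σ n * C₃ ≤ ε₀/2 * n := by
          calc (n:ℝ)*σ n * C₃ = (n:ℝ) * (σ n * C₃) := by ring
            _ ≤ (n:ℝ) * (ε₀/2) := mul_le_mul_of_nonneg_left hF5 hnpos.le
            _ = ε₀/2 * n := by ring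
        linarith
    rw [hP]
    calc Real.exp ((n:ℝ) * An n k + (n:ℝ) * σ n * Bn n k) /
          ∑ l ∈ Finset.range (n+1),
            Real.exp ((n:ℝ) * An n l + (n:ℝ) * σ n * Bn n l)
        ≤ Real.exp ((n:ℝ) * An n k + (n:ℝ) * σ n * Bn n k) /
            Real.exp ((n:ℝ) * An n k0 + (n:ℝ) * σ n * Bn n k0) := by
          gcongr
      _ = Real.exp (((n:ℝ) * An n k + (n:ℝ) * σ n * Bn n k)
            - ((n:ℝ) * An n k0 + (n:ℝ) * σ n * Bn n k0)) := by
          rw [← Real.exp_sub]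
      _ ≤ Real.exp (-(γ/4) * ((n:ℝ)*σ n)) := by
          apply Real.exp_le_exp.mpr
          linarith
  -- sum up
  have hsum : (∑ k ∈ Finset.range (n + 1),
        if ∀ j, J1 j → δ < |(k : ℝ) / n - a j| then P n k else 0)
      ≤ ((n:ℝ)+1) * Real.exp (-(γ/4) * ((n:ℝ)*σ n)) := by
    calc (∑ k ∈ Finset.range (n + 1),
          if ∀ j, J1 j → δ < |(k : ℝ) / n - a j| then P n k else 0)
        ≤ ∑ _k ∈ Finset.range (n + 1), Real.exp (-(γ/4) * ((n:ℝ)*σ n)) := by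
          apply Finset.sum_le_sum
          intro k hk
          by_cases hb : ∀ j, J1 j → δ < |(k:ℝ)/n - a j|
          · rw [if_pos hb]
            exact hkey k (Nat.lt_succ_iff.mp (Finset.mem_range.mp hk)) hb
          · rw [if_neg hb]; positivity
      _ = ((n:ℝ)+1) * Real.exp (-(γ/4) * ((n:ℝ)*σ n)) := by
          rw [Finset.sum_const, Finset.card_range, nsmul_eq_mul]
          push_cast; ring
  have hexp : ((n:ℝ)+1) ≤ Real.exp (γ/8 * ((n:ℝ)*σ n)) := by
    rw [← Real.log_le_iff_le_exp (by positivity)]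
    rw [hsα]
    exact hF6
  calc (∑ k ∈ Finset.range (n + 1),
        if ∀ j, J1 j → δ < |(k : ℝ) / n - a j| then P n k else 0)
      ≤ ((n:ℝ)+1) * Real.exp (-(γ/4) * ((n:ℝ)*σ n)) := hsum
    _ ≤ Real.exp (γ/8 * ((n:ℝ)*σ n)) * Real.exp (-(γ/4) * ((n:ℝ)*σ n)) :=
        mul_le_mul_of_nonneg_right hexp (Real.exp_pos _).le
    _ = Real.exp (γ/8 * ((n:ℝ)*σ n) + -(γ/4) * ((n:ℝ)*σ n)) := by
        rw [← Real.exp_add]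
    _ = Real.exp (-(γ/8) * (n:ℝ) * σ n) := by ring_nf
end

section
/- Let β > 0 and h ∈ ℝ, and let A(a) = β(2a−1)^4 + h(2a−1)^2 + I(a) for a ∈ [0,1], where I(a) = −a log a + (a−1) log(1−a). Define g_β(t) = −E(t)/t² − β t² for t ∈ [−1,1]∖{0} (with E(t) = −((1+t)/2) log(1+t) − ((1−t)/2) log(1−t)) and g(β) = inf_{t∈[−1,1]∖{0}} g_β(t). Then: (i) if h < g(β), A has the unique maximizer a = 1/2, and it is 2-regular; (ii) if h > g(β), A has exactly two maximizers a_− and a_+ with 0 < a_− < 1/2 < a_+ < 1 and a_− + a_+ = 1, and both are 2-regular. -/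
open Real Set Filter

noncomputable def Lf (t : ℝ) : ℝ := (Real.log (1+t) - Real.log (1-t))/2

noncomputable def rf (u : ℝ) : ℝ := Lf (Real.sqrt u) / Real.sqrt u

noncomputable def If (a : ℝ) : ℝ := -a * Real.log a + (a - 1) * Real.log (1 - a)

noncomputable def EEf (t : ℝ) : ℝ :=
  -((1 + t) / 2) * Real.log (1 + t) - ((1 - t) / 2) * Real.log (1 - t)

lemma log_one_add_deriv {x : ℝ} (hp : (0:ℝ) < 1 + x) :
    HasDerivAt (fun t : ℝ => Real.log (1+t)) (1/(1+x)) x := by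
  have := (Real.hasDerivAt_log hp.ne').comp x ((hasDerivAt_id x).const_add 1)
  simpa [one_div, Function.comp_def] using this

lemma log_one_sub_deriv {x : ℝ} (hm : (0:ℝ) < 1 - x) :
    HasDerivAt (fun t : ℝ => Real.log (1-t)) (-(1/(1-x))) x := by
  have h := (Real.hasDerivAt_log hm.ne').comp x ((hasDerivAt_id x).neg.const_add 1)
  simpa [one_div, Function.comp_def] using h

lemma lem_Lf_deriv {t : ℝ} (h1 : -1 < t) (h2 : t < 1) :
    HasDerivAt Lf (1/(1-t^2)) t := by
  have hp : (0:ℝ) < 1 + t := by linarith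
  have hm : (0:ℝ) < 1 - t := by linarith
  have := (((log_one_add_deriv hp).sub (log_one_sub_deriv hm)).div_const 2)
  convert (preTransparency := .default) this using 1
  have h2 : 1 - t^2 = (1+t)*(1-t) := by ring
  rw [h2]
  field_simp
  ring

lemma lem_rf_eq {t : ℝ} (h0 : 0 < t) : rf (t^2) = Lf t / t := by
  unfold rf
  rw [Real.sqrt_sq h0.le]

lemma lem_log_lb {x : ℝ} (hx : 0 < x) : 1 - 1/x ≤ Real.log x := by
  simpa [one_div] using Real.one_sub_inv_le_log_of_pos hx

lemma lem_log_cubic {u : ℝ} (hu : -1 < u) :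
    Real.log (1+u) ≤ u - u^2/2 + u^3/3 := by
  set f : ℝ → ℝ := fun u => u - u^2/2 + u^3/3 - Real.log (1+u) with hf
  have hder : ∀ x : ℝ, -1 < x → HasDerivAt f (x^3/(1+x)) x := by
    intro x hx
    have hp : (0:ℝ) < 1 + x := by linarith
    have dp : HasDerivAt (fun t : ℝ => t - t^2/2 + t^3/3) (1 - x + x^2) x := by
      have h1 : HasDerivAt (fun t : ℝ => t) 1 x := hasDerivAt_id x
      have h2 : HasDerivAt (fun t : ℝ => t^2) (2*x) x := by
        simpa using hasDerivAt_pow 2 x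
      have h3 : HasDerivAt (fun t : ℝ => t^3) (3*x^2) x := by
        simpa using hasDerivAt_pow 3 x
      have := (h1.sub (h2.div_const 2)).add (h3.div_const 3)
      convert (preTransparency := .default) this using 1
      ring
    have := dp.sub (log_one_add_deriv hp)
    convert (preTransparency := .default) this using 1
    field_simp
    ring
  have key : ∀ x : ℝ, -1 < x → 0 ≤ f x := by
    intro x hx
    rcases le_or_gt 0 x with h | h
    · have mono : MonotoneOn f (Ici (0:ℝ)) := by
        apply monotoneOn_of_hasDerivWithinAt_nonneg (convex_Ici 0)
          (f' := fun x => x^3/(1+x))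
        · intro y hy
          simp only [mem_Ici] at hy
          exact ((hder y (by linarith)).continuousAt).continuousWithinAt
        · intro y hy
          simp only [interior_Ici, mem_Ioi] at hy
          exact ((hder y (by linarith)).hasDerivWithinAt)
        · intro y hy
          simp only [interior_Ici, mem_Ioi] at hy
          have : (0:ℝ) < 1 + y := by linarith
          positivity
      have := mono (self_mem_Ici) (by simpa using h) h
      simpa [hf] using this
    · have anti : AntitoneOn f (Ioc (-1:ℝ) 0) := by
        apply antitoneOn_of_hasDerivWithinAt_nonpos (convex_Ioc (-1) 0)
          (f' := fun x => x^3/(1+x))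
        · intro y hy
          exact ((hder y hy.1).continuousAt).continuousWithinAt
        · intro y hy
          have hy' : y ∈ Ioo (-1:ℝ) 0 := by rwa [interior_Ioc] at hy
          exact ((hder y hy'.1).hasDerivWithinAt)
        · intro y hy
          have hy' : y ∈ Ioo (-1:ℝ) 0 := by rwa [interior_Ioc] at hy
          have h1 : (0:ℝ) < 1 + y := by linarith [hy'.1]
          have h2 : y^3 ≤ 0 := by nlinarith [sq_nonneg y, hy'.2.le]
          exact div_nonpos_of_nonpos_of_nonneg h2 h1.le
      have := anti (mem_Ioc.mpr ⟨hx, h.le⟩) (mem_Ioc.mpr ⟨by norm_num, le_refl 0⟩) h.le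
      simpa [hf] using this
  have := key u hu
  simp only [hf] at this
  linarith

lemma lem_EE_nonpos {t : ℝ} (h1 : -1 ≤ t) (h2 : t ≤ 1) : EEf t ≤ 0 := by
  unfold EEf
  rcases eq_or_lt_of_le h1 with rfl | h1'
  · norm_num
    positivity
  rcases eq_or_lt_of_le h2 with rfl | h2'
  · norm_num
    positivity
  have hp : (0:ℝ) < 1 + t := by linarith
  have hm : (0:ℝ) < 1 - t := by linarith
  have l1 := lem_log_lb hp
  have l2 := lem_log_lb hm
  have e1 : (1+t) * Real.log (1+t) ≥ t := by
    have := mul_le_mul_of_nonneg_left l1 hp.le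
    calc t = (1+t) * (1 - 1/(1+t)) := by field_simp; ring
    _ ≤ (1+t) * Real.log (1+t) := this
  have e2 : (1-t) * Real.log (1-t) ≥ -t := by
    have := mul_le_mul_of_nonneg_left l2 hm.le
    calc -t = (1-t) * (1 - 1/(1-t)) := by field_simp; ring
    _ ≤ (1-t) * Real.log (1-t) := this
  nlinarith

lemma lem_EE_ub {t : ℝ} (h1 : -1 < t) (h2 : t < 1) :
    -EEf t ≤ t^2/2 + t^4/3 := by
  unfold EEf
  have hp : (0:ℝ) < 1 + t := by linarith
  have hm : (0:ℝ) < 1 - t := by linarith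
  have c1 : Real.log (1+t) ≤ t - t^2/2 + t^3/3 := lem_log_cubic h1
  have c2 : Real.log (1-t) ≤ -t - t^2/2 - t^3/3 := by
    have := lem_log_cubic (u := -t) (by linarith)
    have e : (1:ℝ) + -t = 1 - t := by ring
    rw [e] at this
    calc Real.log (1-t) ≤ -t - (-t)^2/2 + (-t)^3/3 := this
    _ = -t - t^2/2 - t^3/3 := by ring
  have m1 : ((1+t)/2) * Real.log (1+t) ≤ ((1+t)/2) * (t - t^2/2 + t^3/3) :=
    mul_le_mul_of_nonneg_left c1 (by linarith)
  have m2 : ((1-t)/2) * Real.log (1-t) ≤ ((1-t)/2) * (-t - t^2/2 - t^3/3) :=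
    mul_le_mul_of_nonneg_left c2 (by linarith)
  nlinarith

lemma lem_If_eq {a : ℝ} (h0 : 0 ≤ a) (h1 : a ≤ 1) :
    If a = EEf (2*a-1) + Real.log 2 := by
  unfold If EEf
  rcases eq_or_lt_of_le h0 with rfl | h0'
  · norm_num
  rcases eq_or_lt_of_le h1 with rfl | h1'
  · norm_num
  have hp : (0:ℝ) < a := h0'
  have hm : (0:ℝ) < 1 - a := by linarith
  have e1 : (1 + (2*a-1)) = 2*a := by ring
  have e2 : (1 - (2*a-1)) = 2*(1-a) := by ring
  rw [e1, e2, Real.log_mul (by norm_num) hp.ne', Real.log_mul (by norm_num) hm.ne']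
  ring

lemma lem_If_sym (a : ℝ) : If (1-a) = If a := by
  unfold If
  have e : (1 - (1-a)) = a := by ring
  rw [e]
  ring_nf

lemma lem_If_half : If (1/2 : ℝ) = Real.log 2 := by
  have : Real.log (1/2 : ℝ) = -Real.log 2 := by
    rw [show (1:ℝ)/2 = 2⁻¹ by norm_num, Real.log_inv]
  unfold If
  norm_num [this]
  ring

lemma lem_EE_zero : EEf 0 = 0 := by
  unfold EEf; norm_num

lemma Lf_zero : Lf 0 = 0 := by unfold Lf; norm_num

lemma cont_integrand {u : ℝ} (h0 : 0 ≤ u) (h1 : u < 1) :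
    ContinuousOn (fun x : ℝ => (1 - u*x^2)⁻¹) (uIcc 0 1) := by
  apply ContinuousOn.inv₀
  · fun_prop
  · intro x hx
    rw [uIcc_of_le (by norm_num)] at hx
    have hx1 : x^2 ≤ 1 := by
      rcases hx with ⟨ha, hb⟩; nlinarith
    have : u * x^2 ≤ u := by nlinarith
    have : u * x^2 < 1 := lt_of_le_of_lt this h1
    intro hc
    rw [sub_eq_zero] at hc
    exact absurd hc.symm (ne_of_lt this)

lemma lem_rf_int {u : ℝ} (h0 : 0 < u) (h1 : u < 1) :
    rf u = ∫ x in (0:ℝ)..1, (1 - u*x^2)⁻¹ := by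
  set t := Real.sqrt u with ht
  have ht0 : 0 < t := Real.sqrt_pos.mpr h0
  have ht1 : t < 1 := by
    rw [ht, show (1:ℝ) = Real.sqrt 1 by simp]
    exact Real.sqrt_lt_sqrt h0.le h1
  have htu : t^2 = u := Real.sq_sqrt h0.le
  have key : ∫ x in (0:ℝ)..1, (1 - u*x^2)⁻¹ = Lf (t*1) / t - Lf (t*0) / t := by
    apply intervalIntegral.integral_eq_sub_of_hasDerivAt (f := fun x => Lf (t*x) / t)
    · intro x hx
      rw [uIcc_of_le (by norm_num)] at hx
      have hb : |t*x| < 1 := by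
        rw [abs_mul, abs_of_nonneg ht0.le, abs_of_nonneg hx.1]
        nlinarith [hx.2]
      have h1' : -1 < t*x := by cases abs_lt.mp hb; linarith
      have h2' : t*x < 1 := (abs_lt.mp hb).2
      have dL : HasDerivAt Lf (1/(1-(t*x)^2)) (t*x) := lem_Lf_deriv h1' h2'
      have dc : HasDerivAt (fun x : ℝ => t*x) t x := by
        simpa using (hasDerivAt_id x).const_mul t
      have := ((dL.comp x dc).div_const t)
      convert (preTransparency := .default) this using 1
      rw [mul_pow, htu]
      rw [mul_div_assoc, div_self ht0.ne', mul_one, one_div]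
    · apply ContinuousOn.intervalIntegrable
      exact cont_integrand h0.le h1
  have hrf : rf u = Lf t / t := by rw [← htu]; exact lem_rf_eq ht0
  rw [key, hrf, mul_zero, Lf_zero, mul_one]
  simp

lemma ptwise_convex {p q lam mu : ℝ} (hp : 0 < p) (hq : 0 < q)
    (hl : 0 < lam) (hm : 0 < mu) (hs : lam + mu = 1) :
    (lam*p + mu*q)⁻¹ ≤ lam * p⁻¹ + mu * q⁻¹ := by
  have hden : 0 < lam*p + mu*q := by positivity
  rw [inv_le_iff_one_le_mul₀ hden]
  have expand : (lam * p⁻¹ + mu * q⁻¹) * (lam*p + mu*q)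
      = lam^2 + mu^2 + lam*mu*(q/p + p/q) := by
    field_simp
    ring
  have amgm : 2 ≤ q/p + p/q := by
    rw [div_add_div _ _ hp.ne' hq.ne', le_div_iff₀ (by positivity)]
    nlinarith [sq_nonneg (p-q)]
  nlinarith [mul_pos hl hm]

lemma ptwise_strict {p q lam mu : ℝ} (hp : 0 < p) (hq : 0 < q) (hpq : p ≠ q)
    (hl : 0 < lam) (hm : 0 < mu) (hs : lam + mu = 1) :
    (lam*p + mu*q)⁻¹ < lam * p⁻¹ + mu * q⁻¹ := by
  have hden : 0 < lam*p + mu*q := by positivity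
  rw [inv_lt_iff_one_lt_mul₀ hden]
  have amgm : 2 < q/p + p/q := by
    rw [div_add_div _ _ hp.ne' hq.ne', lt_div_iff₀ (by positivity)]
    have hne : p - q ≠ 0 := sub_ne_zero.mpr hpq
    have : (p-q)^2 > 0 := by positivity
    nlinarith
  have expand : (lam * p⁻¹ + mu * q⁻¹) * (lam*p + mu*q)
      = lam^2 + mu^2 + lam*mu*(q/p + p/q) := by
    field_simp
    ring
  nlinarith [mul_pos hl hm]

lemma lem_rf_sconv {ua ub lam mu : ℝ} (h0 : 0 < ua) (hab : ua < ub) (h1 : ub < 1)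
    (hl : 0 < lam) (hm : 0 < mu) (hs : lam + mu = 1) :
    rf (lam*ua + mu*ub) < lam * rf ua + mu * rf ub := by
  have hub0 : 0 < ub := h0.trans hab
  have hc0 : 0 < lam*ua + mu*ub := by nlinarith [mul_pos hl h0, mul_pos hm hub0]
  have hc1 : lam*ua + mu*ub < 1 := by nlinarith
  rw [lem_rf_int hc0 hc1, lem_rf_int h0 (hab.trans h1), lem_rf_int hub0 h1]
  have ia : IntervalIntegrable (fun x : ℝ => (1 - ua*x^2)⁻¹) MeasureTheory.volume 0 1 :=
    (cont_integrand h0.le (hab.trans h1)).intervalIntegrable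
  have ib : IntervalIntegrable (fun x : ℝ => (1 - ub*x^2)⁻¹) MeasureTheory.volume 0 1 :=
    (cont_integrand hub0.le h1).intervalIntegrable
  have ic : IntervalIntegrable (fun x : ℝ => (1 - (lam*ua+mu*ub)*x^2)⁻¹)
      MeasureTheory.volume 0 1 :=
    (cont_integrand hc0.le hc1).intervalIntegrable
  have key : 0 < ∫ x in (0:ℝ)..1,
      (lam * (1 - ua*x^2)⁻¹ + mu * (1 - ub*x^2)⁻¹ - (1 - (lam*ua+mu*ub)*x^2)⁻¹) := by
    apply intervalIntegral.intervalIntegral_pos_of_pos_on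
    · exact (((ia.const_mul lam).add (ib.const_mul mu)).sub ic)
    · intro x hx
      have hx2 : (0:ℝ) < x^2 := pow_pos hx.1 2
      have hxl : x^2 ≤ 1 := by nlinarith [hx.1, hx.2]
      have hpa : 0 < 1 - ua*x^2 := by nlinarith
      have hpb : 0 < 1 - ub*x^2 := by nlinarith
      have hne : 1 - ua*x^2 ≠ 1 - ub*x^2 := by
        intro hcon
        have : ua * x^2 = ub * x^2 := by linarith
        have := mul_right_cancel₀ (by positivity : x^2 ≠ 0) this
        exact absurd this (ne_of_lt hab)
      have := ptwise_strict hpa hpb hne hl hm hs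
      have e : lam*(1 - ua*x^2) + mu*(1 - ub*x^2) = 1 - (lam*ua+mu*ub)*x^2 := by
        nlinarith [hs]
      rw [e] at this
      linarith
    · norm_num
  have lin : ∫ x in (0:ℝ)..1,
      (lam * (1 - ua*x^2)⁻¹ + mu * (1 - ub*x^2)⁻¹ - (1 - (lam*ua+mu*ub)*x^2)⁻¹)
      = lam * (∫ x in (0:ℝ)..1, (1 - ua*x^2)⁻¹) + mu * (∫ x in (0:ℝ)..1, (1 - ub*x^2)⁻¹)
        - ∫ x in (0:ℝ)..1, (1 - (lam*ua+mu*ub)*x^2)⁻¹ := by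
    rw [intervalIntegral.integral_sub ((ia.const_mul lam).add (ib.const_mul mu)) ic,
        intervalIntegral.integral_add (ia.const_mul lam) (ib.const_mul mu),
        intervalIntegral.integral_const_mul, intervalIntegral.integral_const_mul]
  rw [lin] at key
  linarith

lemma lem_rf_deriv {u : ℝ} (h0 : 0 < u) (h1 : u < 1) :
    HasDerivAt rf ((1/(2*u)) * ((1-u)⁻¹ - rf u)) u := by
  obtain ⟨s, hs0, rfl⟩ : ∃ s : ℝ, 0 < s ∧ u = s^2 :=
    ⟨Real.sqrt u, Real.sqrt_pos.mpr h0, (Real.sq_sqrt h0.le).symm⟩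
  have hs1 : s < 1 := by nlinarith
  have hss : Real.sqrt (s^2) = s := Real.sqrt_sq hs0.le
  have hsm : (0:ℝ) < 1 - s^2 := by nlinarith
  have dsqrt : HasDerivAt Real.sqrt (1/(2*s)) (s^2) := by
    have := Real.hasDerivAt_sqrt (by positivity : (s:ℝ)^2 ≠ 0)
    rwa [hss] at this
  have dL : HasDerivAt Lf (1/(1-s^2)) (Real.sqrt (s^2)) := by
    rw [hss]; exact lem_Lf_deriv (by linarith) hs1
  have dnum : HasDerivAt (fun v => Lf (Real.sqrt v)) ((1/(1-s^2)) * (1/(2*s))) (s^2) :=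
    dL.comp (s^2) dsqrt
  have dden : HasDerivAt Real.sqrt (1/(2*s)) (s^2) := dsqrt
  have hden_ne : Real.sqrt (s^2) ≠ 0 := by rw [hss]; exact hs0.ne'
  have dq := dnum.div dden hden_ne
  have erf : rf = fun v => Lf (Real.sqrt v) / Real.sqrt v := rfl
  rw [erf]
  convert (preTransparency := .default) dq using 1
  rw [hss]
  have hb : ((fun v => Lf (Real.sqrt v) / Real.sqrt v) (s^2) : ℝ) = Lf s / s := by
    simp only [hss]
  rw [hb]
  field_simp

noncomputable def Af (β h a : ℝ) : ℝ := β * (2*a-1)^4 + h * (2*a-1)^2 + If a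

lemma lem_Af_cont (β h : ℝ) : Continuous (Af β h) := by
  unfold Af If
  have c1 : Continuous fun a : ℝ => -a * Real.log a := by
    have := Real.continuous_mul_log
    have : Continuous fun a : ℝ => -(a * Real.log a) := this.neg
    simpa [neg_mul] using this
  have c2 : Continuous fun a : ℝ => (a - 1) * Real.log (1 - a) := by
    have base : Continuous fun x : ℝ => x * Real.log x := Real.continuous_mul_log
    have comp : Continuous fun a : ℝ => (1 - a) * Real.log (1 - a) :=
      base.comp (continuous_const.sub continuous_id)
    have : Continuous fun a : ℝ => -((1 - a) * Real.log (1 - a)) := comp.neg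
    convert this using 1
    funext a
    ring
  fun_prop

lemma lem_Af_hasDeriv {β h : ℝ} {a : ℝ} (h0 : 0 < a) (h1 : a < 1) :
    HasDerivAt (Af β h)
      (8*β*(2*a-1)^3 + 4*h*(2*a-1) + Real.log (1-a) - Real.log a) a := by
  have hm : (0:ℝ) < 1 - a := by linarith
  have d1 : HasDerivAt (fun a : ℝ => β * (2*a-1)^4) (8*β*(2*a-1)^3) a := by
    have dp : HasDerivAt (fun a : ℝ => (2*a-1)^4) (4*(2*a-1)^3*2) a := by
      have inner : HasDerivAt (fun a : ℝ => 2*a-1) 2 a := by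
        simpa using ((hasDerivAt_id a).const_mul 2).sub_const 1
      exact (hasDerivAt_pow 4 _).comp a inner
    have := dp.const_mul β
    convert (preTransparency := .default) this using 1
    ring
  have d2 : HasDerivAt (fun a : ℝ => h * (2*a-1)^2) (4*h*(2*a-1)) a := by
    have dp : HasDerivAt (fun a : ℝ => (2*a-1)^2) (2*(2*a-1)^1*2) a := by
      have inner : HasDerivAt (fun a : ℝ => 2*a-1) 2 a := by
        simpa using ((hasDerivAt_id a).const_mul 2).sub_const 1
      exact (hasDerivAt_pow 2 _).comp a inner
    have := dp.const_mul h
    convert (preTransparency := .default) this using 1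
    ring
  have d3 : HasDerivAt (fun a : ℝ => -a * Real.log a) (-(Real.log a + 1)) a := by
    have := (Real.hasDerivAt_mul_log h0.ne').neg
    convert (preTransparency := .default) this using 1
    funext x
    simp
  have d4 : HasDerivAt (fun a : ℝ => (a-1) * Real.log (1-a)) (Real.log (1-a) + 1) a := by
    have base : HasDerivAt (fun x : ℝ => x * Real.log x) (Real.log (1-a) + 1) (1-a) :=
      Real.hasDerivAt_mul_log hm.ne'
    have inner : HasDerivAt (fun a : ℝ => 1-a) (-1) a := by
      exact (hasDerivAt_id a).const_sub 1
    have comp := base.comp a inner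
    have : HasDerivAt (fun a : ℝ => -((1-a) * Real.log (1-a)))
        ((Real.log (1-a) + 1)) a := by
      have := comp.neg
      convert (preTransparency := .default) this using 1
      ring
    convert (preTransparency := .default) this using 1
    funext x
    ring
  have := ((d1.add d2).add (d3.add d4))
  have e : Af β h = fun a => (β * (2*a-1)^4 + h * (2*a-1)^2)
      + (-a * Real.log a + (a-1) * Real.log (1-a)) := by
    funext x
    unfold Af If
    ring
  rw [e]
  convert (preTransparency := .default) this using 1
  ring

lemma lem_Af_deriv {β h : ℝ} {a : ℝ} (h0 : 0 < a) (h1 : a < 1) :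
    deriv (Af β h) a
      = 8*β*(2*a-1)^3 + 4*h*(2*a-1) + Real.log (1-a) - Real.log a :=
  (lem_Af_hasDeriv h0 h1).deriv

lemma lem_Af_deriv2 {β h : ℝ} {a : ℝ} (h0 : 0 < a) (h1 : a < 1) :
    iteratedDeriv 2 (Af β h) a
      = 48*β*(2*a-1)^2 + 8*h - (1-a)⁻¹ - a⁻¹ := by
  rw [iteratedDeriv_succ, iteratedDeriv_one]
  have hev : deriv (Af β h) =ᶠ[nhds a]
      (fun x => 8*β*(2*x-1)^3 + 4*h*(2*x-1) + Real.log (1-x) - Real.log x) := by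
    have hmem : Ioo (0:ℝ) 1 ∈ nhds a := isOpen_Ioo.mem_nhds ⟨h0, h1⟩
    filter_upwards [hmem] with x hx
    exact lem_Af_deriv hx.1 hx.2
  rw [hev.deriv_eq]
  have hm : (0:ℝ) < 1 - a := by linarith
  have d1 : HasDerivAt (fun x : ℝ => 8*β*(2*x-1)^3) (48*β*(2*a-1)^2) a := by
    have dp : HasDerivAt (fun x : ℝ => (2*x-1)^3) (3*(2*a-1)^2*2) a := by
      have inner : HasDerivAt (fun x : ℝ => 2*x-1) 2 a := by
        simpa using ((hasDerivAt_id a).const_mul 2).sub_const 1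
      exact (hasDerivAt_pow 3 _).comp a inner
    have := dp.const_mul (8*β)
    convert (preTransparency := .default) this using 1
    ring
  have d2 : HasDerivAt (fun x : ℝ => 4*h*(2*x-1)) (8*h) a := by
    have inner : HasDerivAt (fun x : ℝ => 2*x-1) 2 a := by
      simpa using ((hasDerivAt_id a).const_mul 2).sub_const 1
    have := inner.const_mul (4*h)
    convert (preTransparency := .default) this using 1
    ring
  have d3 : HasDerivAt (fun x : ℝ => Real.log (1-x)) (-(1-a)⁻¹) a := by
    have inner : HasDerivAt (fun x : ℝ => 1-x) (-1) a := by
      exact (hasDerivAt_id a).const_sub 1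
    have := (Real.hasDerivAt_log hm.ne').comp a inner
    convert (preTransparency := .default) this using 1
    field_simp
  have d4 : HasDerivAt (fun x : ℝ => Real.log x) (a⁻¹) a := by
    simpa [one_div] using Real.hasDerivAt_log h0.ne'
  have D : HasDerivAt
      (fun x => 8*β*(2*x-1)^3 + 4*h*(2*x-1) + Real.log (1-x) - Real.log x)
      (48*β*(2*a-1)^2 + 8*h - (1-a)⁻¹ - a⁻¹) a := by
    have := ((d1.add d2).add d3).sub d4
    convert (preTransparency := .default) this using 1
  rw [D.deriv]

lemma lem_collinear (β h : ℝ) {u1 u2 u3 : ℝ} (h1 : 0 < u1) (h12 : u1 < u2)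
    (h23 : u2 < u3) (h3 : u3 < 1)
    (e1 : rf u1 = 4*β*u1 + 2*h) (e2 : rf u2 = 4*β*u2 + 2*h)
    (e3 : rf u3 = 4*β*u3 + 2*h) : False := by
  have hd : 0 < u3 - u1 := by linarith
  set lam := (u3 - u2)/(u3 - u1) with hlam
  set mu := (u2 - u1)/(u3 - u1) with hmu
  have hl : 0 < lam := div_pos (by linarith) hd
  have hm : 0 < mu := div_pos (by linarith) hd
  have hs : lam + mu = 1 := by
    rw [hlam, hmu]
    field_simp; ring
  have hu2 : lam*u1 + mu*u3 = u2 := by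
    rw [hlam, hmu]
    field_simp
    ring
  have key := lem_rf_sconv h1 (h12.trans h23) h3 hl hm hs
  rw [hu2, e1, e2, e3] at key
  have expand : lam*(4*β*u1+2*h) + mu*(4*β*u3+2*h) = 4*β*u2 + 2*h := by
    linear_combination 4*β*hu2 + 2*h*hs
  linarith

lemma lem_stat {β h a : ℝ} (h0 : 1/2 < a) (h1 : a < 1)
    (hd : deriv (Af β h) a = 0) :
    rf ((2*a-1)^2) = 4*β*(2*a-1)^2 + 2*h := by
  have ht0 : 0 < 2*a-1 := by linarith
  have ht1 : 2*a-1 < 1 := by linarith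
  have formula := lem_Af_deriv (β := β) (h := h) (by linarith : (0:ℝ) < a) h1
  rw [hd] at formula
  have hlog : Real.log (1-a) - Real.log a = -2 * Lf (2*a-1) := by
    have e1 : 1 - a = (1-(2*a-1))/2 := by ring
    have e2 : a = (1+(2*a-1))/2 := by ring
    rw [e1]
    nth_rewrite 2 [e2]
    rw [Real.log_div (by linarith) (by norm_num), Real.log_div (by linarith) (by norm_num)]
    unfold Lf
    ring
  have hLf : Lf (2*a-1) = (2*a-1) * (4*β*(2*a-1)^2 + 2*h) := by
    linear_combination formula/2 + hlog/2
  rw [lem_rf_eq ht0, hLf]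
  field_simp

lemma lem_dd_neg {β h ustar u0 : ℝ} (h0 : 0 < u0) (h0s : u0 < ustar)
    (hs1 : ustar < 1)
    (hstat : rf ustar = 4*β*ustar + 2*h)
    (hpos : 0 < 4*β*u0 + 2*h - rf u0) :
    12*β*ustar + 2*h - (1-ustar)⁻¹ < 0 := by
  have hust0 : 0 < ustar := h0.trans h0s
  set c : ℝ := 4*β*u0 + 2*h - rf u0 with hc
  set d : ℝ := ustar - u0 with hdd
  have hdpos : 0 < d := by rw [hdd]; linarith
  set ψ : ℝ → ℝ := fun u => 4*β*u + 2*h - rf u with hψ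
  have hpsistar : ψ ustar = 0 := by
    simp only [hψ]
    linarith [hstat]
  have dψ : HasDerivAt ψ (4*β - (1/(2*ustar)) * ((1-ustar)⁻¹ - rf ustar)) ustar := by
    have dlin : HasDerivAt (fun u : ℝ => 4*β*u + 2*h) (4*β) ustar := by
      simpa using ((hasDerivAt_id ustar).const_mul (4*β)).add_const (2*h)
    exact dlin.sub (lem_rf_deriv hust0 hs1)
  -- slope bound
  have T : Tendsto (slope ψ ustar) (nhdsWithin ustar (Iio ustar))
      (nhds (4*β - (1/(2*ustar)) * ((1-ustar)⁻¹ - rf ustar))) := by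
    have := hasDerivAt_iff_tendsto_slope.mp dψ
    exact this.mono_left (nhdsWithin_mono _ (fun y hy => ne_of_lt hy))
  have hbound : ∀ᶠ y in nhdsWithin ustar (Iio ustar),
      slope ψ ustar y ≤ -c/d := by
    filter_upwards [self_mem_nhdsWithin,
      mem_nhdsWithin_of_mem_nhds (Ioi_mem_nhds h0s)] with y hy1 hy2
    have hy_lt : y < ustar := hy1
    have hy_gt : u0 < y := hy2
    set θ : ℝ := (ustar - y)/d with hθ
    set ν : ℝ := (y - u0)/d with hν
    have hθp : 0 < θ := div_pos (by linarith) hdpos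
    have hνp : 0 < ν := div_pos (by linarith) hdpos
    have hsum : θ + ν = 1 := by
      rw [hθ, hν, hdd]
      rw [← add_div, div_eq_one_iff_eq (by linarith)]; ring
    have hyeq : θ*u0 + ν*ustar = y := by
      rw [hθ, hν, hdd]
      rw [div_mul_eq_mul_div, div_mul_eq_mul_div, ← add_div, div_eq_iff (by linarith)]
      ring
    have conv := lem_rf_sconv h0 h0s hs1 hθp hνp hsum
    rw [hyeq] at conv
    have psi_y : ψ y > θ * c := by
      simp only [hψ, hc]
      have lin : 4*β*y + 2*h = θ*(4*β*u0 + 2*h) + ν*(4*β*ustar + 2*h) := by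
        linear_combination 4*β*hyeq.symm + 2*h*hsum.symm
      have : θ * rf u0 + ν * rf ustar > rf y := conv
      have hνstar : ν * rf ustar = ν * (4*β*ustar + 2*h) := by rw [hstat]
      nlinarith [conv]
    have slope_eq : slope ψ ustar y = ψ y / (y - ustar) := by
      rw [slope_def_field, hpsistar]
      rw [div_eq_div_iff (by linarith) (by linarith)]
      ring
    rw [slope_eq]
    have hneg : y - ustar = -(θ*d) := by
      rw [hθ]
      field_simp; ring
    rw [hneg]
    have hneg2 : -(θ*d) < 0 := by
      have : 0 < θ*d := mul_pos hθp hdpos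
      linarith
    have step : ψ y / -(θ*d) < θ*c / -(θ*d) := (div_lt_div_right_of_neg hneg2).mpr psi_y
    have eq2 : θ*c/ -(θ*d) = -c/d := by
      field_simp
    linarith [step, eq2.le]
  have final := le_of_tendsto T hbound
  have hcd : 0 < c/d := div_pos hpos hdpos
  have hlt : 4*β < (1/(2*ustar))*((1-ustar)⁻¹ - rf ustar) := by
    have : -c/d < 0 := by
      rw [neg_div]
      linarith
    linarith
  have hmul := mul_lt_mul_of_pos_right hlt (by positivity : (0:ℝ) < 2*ustar)
  have hX : (1/(2*ustar))*((1-ustar)⁻¹ - rf ustar)*(2*ustar)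
      = (1-ustar)⁻¹ - rf ustar := by
    field_simp
  rw [hX] at hmul
  rw [hstat] at hmul
  nlinarith [hmul]

lemma lem_EE_even (t : ℝ) : EEf (-t) = EEf t := by
  unfold EEf
  rw [show (1 + -t) = 1 - t by ring, show (1 - -t) = 1 + t by ring]
  ring

lemma lem_Af_sym (β h a : ℝ) : Af β h (1-a) = Af β h a := by
  unfold Af
  rw [lem_If_sym]
  ring_nf

lemma lem_Af_half (β h : ℝ) : Af β h (1/2) = Real.log 2 := by
  unfold Af
  rw [lem_If_half]
  norm_num

lemma lem_diff {β h y : ℝ} (h0 : 0 ≤ y) (h1 : y ≤ 1) (hne : (2*y-1) ≠ 0) :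
    Af β h y - Af β h (1/2)
      = (2*y-1)^2 * (h - (-EEf (2*y-1) / (2*y-1)^2 - β*(2*y-1)^2)) := by
  unfold Af
  rw [lem_If_eq h0 h1, lem_If_half]
  field_simp
  ring

lemma lem_Smem {β : ℝ} {t : ℝ} (h1 : -1 ≤ t) (h2 : t ≤ 1) (h0 : t ≠ 0) :
    -EEf t / t^2 - β*t^2 ∈
      ((fun t => -EEf t / t ^ 2 - β * t ^ 2) '' (Set.Icc (-1:ℝ) 1 \ {0})) :=
  ⟨t, ⟨⟨h1, h2⟩, h0⟩, rfl⟩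

lemma lem_bdd {β : ℝ} (hβ : 0 < β) :
    BddBelow ((fun t => -EEf t / t ^ 2 - β * t ^ 2) '' (Set.Icc (-1:ℝ) 1 \ {0})) := by
  refine ⟨-β, ?_⟩
  rintro x ⟨t, ⟨⟨ht1, ht2⟩, ht0⟩, rfl⟩
  have ht0' : t ≠ 0 := ht0
  have ht2p : 0 < t^2 := by positivity
  have hE : 0 ≤ -EEf t := by linarith [lem_EE_nonpos ht1 ht2]
  have h1 : 0 ≤ -EEf t / t^2 := div_nonneg hE ht2p.le
  have h2 : β*t^2 ≤ β := by nlinarith [mul_le_mul_of_nonneg_left (show t^2 ≤ 1 by nlinarith) hβ.le]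
  simp only
  linarith

lemma lem_Sne (β : ℝ) :
    ((fun t => -EEf t / t ^ 2 - β * t ^ 2) ''
      (Set.Icc (-1:ℝ) 1 \ {0})).Nonempty :=
  ⟨_, lem_Smem (t := 1) (by norm_num) (by norm_num) (by norm_num)⟩

lemma lem_g_le_half {β : ℝ} (hβ : 0 < β) :
    sInf ((fun t => -EEf t / t ^ 2 - β * t ^ 2) '' (Set.Icc (-1:ℝ) 1 \ {0}))
      ≤ 1/2 := by
  by_contra hcon
  push_neg at hcon
  have hεpos : 0 < sInf ((fun t => -EEf t / t ^ 2 - β * t ^ 2) ''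
      (Set.Icc (-1:ℝ) 1 \ {0})) - 1/2 := by linarith
  obtain ⟨t, ht0, ht1, htε⟩ : ∃ t : ℝ, 0 < t ∧ t < 1 ∧
      t^2 < 3*(sInf ((fun t => -EEf t / t ^ 2 - β * t ^ 2) ''
        (Set.Icc (-1:ℝ) 1 \ {0})) - 1/2) := by
    refine ⟨min (1/2) (Real.sqrt (sInf ((fun t => -EEf t / t ^ 2 - β * t ^ 2) ''
        (Set.Icc (-1:ℝ) 1 \ {0})) - 1/2)), lt_min (by norm_num) (Real.sqrt_pos.mpr hεpos),
      lt_of_le_of_lt (min_le_left _ _) (by norm_num), ?_⟩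
    have h1 := min_le_right (1/2 : ℝ) (Real.sqrt (sInf ((fun t => -EEf t / t ^ 2 - β * t ^ 2) ''
        (Set.Icc (-1:ℝ) 1 \ {0})) - 1/2))
    have h0 := lt_min (show (0:ℝ) < 1/2 by norm_num) (Real.sqrt_pos.mpr hεpos)
    have hsq := Real.sq_sqrt hεpos.le
    nlinarith
  have hle := csInf_le (lem_bdd hβ) (lem_Smem (β := β) (by linarith) ht1.le ht0.ne')
  have hub : -EEf t / t^2 ≤ 1/2 + t^2/3 := by
    have := lem_EE_ub (by linarith : (-1:ℝ) < t) ht1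
    have ht2p : 0 < t^2 := by positivity
    rw [div_le_iff₀ ht2p]
    nlinarith
  have hβt : 0 ≤ β*t^2 := by positivity
  linarith

lemma lem_endpoint {β h : ℝ} (hβ : 0 < β) :
    ∃ a : ℝ, 1/2 < a ∧ a < 1 ∧ Af β h 1 < Af β h a := by
  obtain ⟨s, hs⟩ : ∃ s : ℝ, s = Real.exp (-(8*β + 4*|h| + 2)) := ⟨_, rfl⟩
  have hs0 : 0 < s := hs ▸ Real.exp_pos _
  have habs : 0 ≤ |h| := abs_nonneg h
  have hs1 : s < 1 := by
    rw [hs, Real.exp_lt_one_iff]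
    linarith
  have hlogs : Real.log s = -(8*β + 4*|h| + 2) := by rw [hs]; exact Real.log_exp _
  refine ⟨1 - s/2, by linarith, by linarith, ?_⟩
  obtain ⟨t, htdef⟩ : ∃ t : ℝ, t = 1 - s := ⟨_, rfl⟩
  have h2a : 2*(1 - s/2) - 1 = t := by rw [htdef]; ring
  have hAa : Af β h (1 - s/2) = β*t^4 + h*t^2 + EEf t + Real.log 2 := by
    unfold Af
    rw [lem_If_eq (by linarith) (by linarith), h2a]
    ring
  have hA1 : Af β h 1 = β + h := by
    unfold Af If
    norm_num
  rw [hA1, hAa]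
  have ht0 : 0 < t := by rw [htdef]; linarith
  have ht1 : t < 1 := by rw [htdef]; linarith
  have e1 : (1:ℝ) - t = s := by rw [htdef]; ring
  have hEE : EEf t = -((1+t)/2)*Real.log (1+t) - (s/2)*Real.log s := by
    unfold EEf
    rw [e1]
  have hlog2 : ((1+t)/2)*Real.log (1+t) ≤ Real.log 2 := by
    have l1 : Real.log (1+t) ≤ Real.log 2 := Real.log_le_log (by linarith) (by linarith)
    have l0 : 0 ≤ Real.log (1+t) := Real.log_nonneg (by linarith)
    nlinarith
  have hb1 : β*(1 - t^4) ≤ 4*β*s := by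
    have h1t : (0:ℝ) ≤ 1 - t := by linarith
    have hb0 : 1 + t + t^2 + t^3 ≤ 4 := by nlinarith [sq_nonneg t, mul_pos ht0 ht0]
    have key := mul_le_mul_of_nonneg_left hb0 (mul_nonneg hβ.le h1t)
    calc β*(1-t^4) = β*(1-t)*(1+t+t^2+t^3) := by ring
    _ ≤ β*(1-t)*4 := key
    _ = 4*β*(1-t) := by ring
    _ = 4*β*s := by rw [e1]
  have hb2 : h*(1 - t^2) ≤ 2 * |h| * s := by
    have hla : h ≤ |h| := le_abs_self h
    have h1t : 0 ≤ 1 - t^2 := by nlinarith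
    have h1t2 : 1 - t^2 ≤ 2*s := by
      calc 1 - t^2 = (1-t)*(1+t) := by ring
      _ ≤ (1-t)*2 := mul_le_mul_of_nonneg_left (by linarith) (by linarith)
      _ = 2*s := by rw [e1]; ring
    calc h*(1-t^2) ≤ |h| * (1-t^2) := mul_le_mul_of_nonneg_right hla h1t
    _ ≤ |h| * (2*s) := mul_le_mul_of_nonneg_left h1t2 habs
    _ = 2 * |h| * s := by ring
  rw [hEE]
  have hlogeq : (s/2)*Real.log s = -4*β*s - 2 * |h| * s - s := by
    rw [hlogs]
    ring
  linarith [hlog2, hb1, hb2, hlogeq, hs0]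
lemma lem_loglog {c : ℝ} (h0 : 0 < c) (h1 : c < 1) :
    Real.log (1-c) - Real.log c = -2 * Lf (2*c-1) := by
  have e1 : 1 - c = (1-(2*c-1))/2 := by ring
  have e2 : c = (1+(2*c-1))/2 := by ring
  rw [e1]
  nth_rewrite 2 [e2]
  rw [Real.log_div (by linarith) (by norm_num), Real.log_div (by linarith) (by norm_num)]
  unfold Lf
  ring

lemma max_on_Icc_isLocalMax {f : ℝ → ℝ} {a : ℝ} (h0 : 0 < a) (h1 : a < 1)
    (hmax : ∀ y ∈ Set.Icc (0:ℝ) 1, f y ≤ f a) : IsLocalMax f a := by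
  have hmem : Set.Icc (0:ℝ) 1 ∈ nhds a := Icc_mem_nhds h0 h1
  filter_upwards [hmem] with y hy using hmax y hy

lemma lem_uniq_half {β h : ℝ} (p q : ℝ) (hp : 1/2 < p) (hpq : p < q) (hq : q < 1)
    (hpmax : ∀ y ∈ Set.Icc (0:ℝ) 1, Af β h y ≤ Af β h p)
    (hqmax : ∀ y ∈ Set.Icc (0:ℝ) 1, Af β h y ≤ Af β h q) : False := by
  have hp0 : (0:ℝ) < p := by linarith
  have hq0 : (0:ℝ) < q := by linarith
  have hploc : deriv (Af β h) p = 0 :=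
    (max_on_Icc_isLocalMax hp0 (by linarith) hpmax).deriv_eq_zero
  have hqloc : deriv (Af β h) q = 0 :=
    (max_on_Icc_isLocalMax hq0 hq hqmax).deriv_eq_zero
  have hApq : Af β h p = Af β h q :=
    le_antisymm (hqmax p ⟨by linarith, by linarith⟩) (hpmax q ⟨by linarith, by linarith⟩)
  obtain ⟨c, hcmem, hcmin⟩ := isCompact_Icc.exists_isMinOn
    (Set.nonempty_Icc.mpr hpq.le) ((lem_Af_cont β h).continuousOn)
  have hcmin' : ∀ y ∈ Set.Icc p q, Af β h c ≤ Af β h y := fun y hy => hcmin hy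
  obtain ⟨c', hc'1, hc'2, hc'deriv⟩ :
      ∃ c', p < c' ∧ c' < q ∧ deriv (Af β h) c' = 0 := by
    by_cases hc : Af β h c = Af β h p
    · refine ⟨(p+q)/2, by linarith, by linarith, ?_⟩
      have hmid : Af β h p ≤ Af β h ((p+q)/2) := by
        rw [← hc]
        exact hcmin' _ ⟨by linarith, by linarith⟩
      apply IsLocalMax.deriv_eq_zero
      apply max_on_Icc_isLocalMax (by linarith) (by linarith)
      intro y hy
      exact le_trans (hpmax y hy) hmid
    · have hclep : Af β h c ≤ Af β h p := hcmin' p ⟨le_refl p, hpq.le⟩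
      have hcp : c ≠ p := fun hcc => hc (by rw [hcc])
      have hcq : c ≠ q := fun hcc => hc (by rw [hcc, hApq])
      have hc1 : p < c := lt_of_le_of_ne hcmem.1 (Ne.symm hcp)
      have hc2 : c < q := lt_of_le_of_ne hcmem.2 hcq
      refine ⟨c, hc1, hc2, ?_⟩
      apply IsLocalMin.deriv_eq_zero
      have hmem : Set.Icc p q ∈ nhds c := Icc_mem_nhds hc1 hc2
      filter_upwards [hmem] with y hy using hcmin' y hy
  have hs1 := lem_stat hp (by linarith : p < 1) hploc
  have hs2 := lem_stat (by linarith : 1/2 < c') (by linarith : c' < 1) hc'deriv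
  have hs3 := lem_stat (by linarith : 1/2 < q) hq hqloc
  exact lem_collinear β h (by nlinarith : (0:ℝ) < (2*p-1)^2)
    (by nlinarith : (2*p-1)^2 < (2*c'-1)^2)
    (by nlinarith : (2*c'-1)^2 < (2*q-1)^2)
    (by nlinarith : (2*q-1)^2 < 1) hs1 hs2 hs3

lemma lem_dd_ap {β h ap : ℝ} (hβ : 0 < β) (hap1 : 1/2 < ap) (hap2 : ap < 1)
    (hapmax : ∀ y ∈ Set.Icc (0:ℝ) 1, Af β h y ≤ Af β h ap)
    (hgt : Af β h (1/2) < Af β h ap) :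
    48*β*(2*ap-1)^2 + 8*h - (1-ap)⁻¹ - ap⁻¹ < 0 := by
  have hap0 : (0:ℝ) < ap := by linarith
  have hderiv0 : deriv (Af β h) ap = 0 :=
    (max_on_Icc_isLocalMax hap0 hap2 hapmax).deriv_eq_zero
  have hstatp : rf ((2*ap-1)^2) = 4*β*(2*ap-1)^2 + 2*h := lem_stat hap1 hap2 hderiv0
  obtain ⟨c, hcmem, hcs⟩ := exists_hasDerivAt_eq_slope (Af β h)
    (fun x => 8*β*(2*x-1)^3 + 4*h*(2*x-1) + Real.log (1-x) - Real.log x)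
    hap1 ((lem_Af_cont β h).continuousOn)
    (fun x hx => lem_Af_hasDeriv (by linarith [hx.1] : (0:ℝ) < x) (by linarith [hx.2]))
  have hc1 : 1/2 < c := hcmem.1
  have hc2 : c < ap := hcmem.2
  have hsc0 : 0 < 2*c-1 := by linarith
  have hsc1 : 2*c-1 < 2*ap-1 := by linarith
  have hslope_pos : 0 < (Af β h ap - Af β h (1/2)) / (ap - 1/2) :=
    div_pos (by linarith) (by linarith)
  have hval_pos : 0 < 8*β*(2*c-1)^3 + 4*h*(2*c-1) + Real.log (1-c) - Real.log c := by
    rw [hcs]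
    exact hslope_pos
  have hlogc := lem_loglog (show (0:ℝ) < c by linarith) (by linarith : c < 1)
  have h1 : 0 < 8*β*(2*c-1)^3 + 4*h*(2*c-1) - 2*Lf (2*c-1) := by
    have expand : 8*β*(2*c-1)^3 + 4*h*(2*c-1) + Real.log (1-c) - Real.log c
        = 8*β*(2*c-1)^3 + 4*h*(2*c-1) + (Real.log (1-c) - Real.log c) := by ring
    rw [expand, hlogc] at hval_pos
    linarith
  have hψ0 : 0 < 4*β*(2*c-1)^2 + 2*h - rf ((2*c-1)^2) := by
    rw [lem_rf_eq hsc0]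
    have hLflt : Lf (2*c-1) / (2*c-1) < 4*β*(2*c-1)^2 + 2*h := by
      rw [div_lt_iff₀ hsc0]
      nlinarith [h1]
    linarith
  have hdd := lem_dd_neg (pow_pos hsc0 2)
    (by nlinarith : (2*c-1)^2 < (2*ap-1)^2)
    (by nlinarith : (2*ap-1)^2 < 1) hstatp hψ0
  have hiden : (1-ap)⁻¹ + ap⁻¹ = 4*(1-(2*ap-1)^2)⁻¹ := by
    have h1a : ap ≠ 0 := hap0.ne'
    have h2a : (1:ℝ) - ap ≠ 0 := by intro hc'; apply absurd hc'; intro _; linarith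
    have h3a : (1:ℝ) - (2*ap-1)^2 ≠ 0 := by nlinarith [sq_nonneg (2*ap-1)]
    rw [inv_eq_one_div, inv_eq_one_div, inv_eq_one_div, div_add_div _ _ h2a h1a, mul_one_div, div_eq_div_iff (mul_ne_zero h2a h1a) h3a]
    ring
  linarith [hdd, hiden]
/-- Phase diagram of the four-spin model, off-critical cases: with
`A(a) = β(2a−1)⁴ + h(2a−1)² + I(a)` and `g(β) = inf_{t∈[−1,1]∖{0}} (−E(t)/t² − βt²)`:
(i) if `h < g(β)`, then `1/2` is the unique maximizer of `A` on `[0,1]` and it is 2-regular;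
(ii) if `h > g(β)`, then `A` has exactly two maximizers `a₋ < 1/2 < a₊` with `a₋ + a₊ = 1`,
both 2-regular. -/
theorem four_spin_phase_diagram_offcritical (β h : ℝ) (hβ : 0 < β)
    (I : ℝ → ℝ) (hI : ∀ a, I a = -a * Real.log a + (a - 1) * Real.log (1 - a))
    (A : ℝ → ℝ)
    (hA : ∀ a, A a = β * (2 * a - 1) ^ 4 + h * (2 * a - 1) ^ 2 + I a)
    (E : ℝ → ℝ)
    (hE : ∀ t, E t = -((1 + t) / 2) * Real.log (1 + t) -
      ((1 - t) / 2) * Real.log (1 - t))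
    (g : ℝ)
    (hg : g = sInf ((fun t => -E t / t ^ 2 - β * t ^ 2) ''
      (Set.Icc (-1 : ℝ) 1 \ {0}))) :
    (h < g →
      (∀ y ∈ Set.Icc (0 : ℝ) 1, A y ≤ A (1 / 2)) ∧
      (∀ x ∈ Set.Icc (0 : ℝ) 1, (∀ y ∈ Set.Icc (0 : ℝ) 1, A y ≤ A x) → x = 1 / 2) ∧
      deriv A (1 / 2) = 0 ∧ iteratedDeriv 2 A (1 / 2) < 0) ∧
    (g < h →
      ∃ am ap : ℝ, 0 < am ∧ am < 1 / 2 ∧ 1 / 2 < ap ∧ ap < 1 ∧ am + ap = 1 ∧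
        (∀ y ∈ Set.Icc (0 : ℝ) 1, A y ≤ A am) ∧
        (∀ y ∈ Set.Icc (0 : ℝ) 1, A y ≤ A ap) ∧
        (∀ x ∈ Set.Icc (0 : ℝ) 1,
          (∀ y ∈ Set.Icc (0 : ℝ) 1, A y ≤ A x) → x = am ∨ x = ap) ∧
        deriv A am = 0 ∧ iteratedDeriv 2 A am < 0 ∧
        deriv A ap = 0 ∧ iteratedDeriv 2 A ap < 0) := by
  have hI' : I = If := funext fun a => (hI a).trans rfl
  subst hI'
  have hA' : A = Af β h := funext fun a => (hA a).trans rfl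
  subst hA'
  have hE' : E = EEf := funext fun a => (hE a).trans rfl
  subst hE'
  subst hg
  constructor
  · -- case (i)
    intro hlt
    have hh_half : h < 1/2 := lt_of_lt_of_le hlt (lem_g_le_half hβ)
    have hstrict : ∀ y ∈ Set.Icc (0:ℝ) 1, y ≠ 1/2 → Af β h y < Af β h (1/2) := by
      intro y hy hne
      have htne : 2*y - 1 ≠ 0 := by
        intro hc
        apply hne
        linarith
      have hmem := lem_Smem (β := β) (t := 2*y-1)
        (by linarith [hy.1]) (by linarith [hy.2]) htne
      have hgle := csInf_le (lem_bdd hβ) hmem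
      have hdiff := lem_diff (β := β) (h := h) hy.1 hy.2 htne
      have ht2 : 0 < (2*y-1)^2 := by positivity
      have hneg : (2*y-1)^2 *
          (h - (-EEf (2*y-1) / (2*y-1)^2 - β*(2*y-1)^2)) < 0 :=
        mul_neg_of_pos_of_neg ht2 (by linarith)
      linarith [hdiff]
    have hmax : ∀ y ∈ Set.Icc (0:ℝ) 1, Af β h y ≤ Af β h (1/2) := by
      intro y hy
      rcases eq_or_ne y (1/2) with rfl | hne
      · exact le_refl _
      · exact (hstrict y hy hne).le
    refine ⟨hmax, ?_, ?_, ?_⟩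
    · intro x hx hxmax
      by_contra hne
      have h1 := hstrict x hx hne
      have h2 := hxmax (1/2) ⟨by norm_num, by norm_num⟩
      linarith
    · exact (max_on_Icc_isLocalMax (by norm_num) (by norm_num) hmax).deriv_eq_zero
    · rw [lem_Af_deriv2 (β := β) (h := h) (by norm_num : (0:ℝ) < 1/2) (by norm_num)]
      norm_num
      linarith
  · -- case (ii)
    intro hgt
    obtain ⟨v, hvmem, hvlt⟩ := exists_lt_of_csInf_lt (lem_Sne β) hgt
    obtain ⟨t₁, ⟨⟨ht₁a, ht₁b⟩, ht₁0⟩, hveq⟩ := hvmem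
    have ht₁0' : t₁ ≠ 0 := ht₁0
    have hveq' : -EEf t₁ / t₁^2 - β*t₁^2 = v := hveq
    obtain ⟨τ, hτdef⟩ : ∃ τ : ℝ, τ = |t₁| := ⟨_, rfl⟩
    have hτ0 : 0 < τ := hτdef ▸ abs_pos.mpr ht₁0'
    have hτ1 : τ ≤ 1 := hτdef ▸ abs_le.mpr ⟨ht₁a, ht₁b⟩
    have hτval : -EEf τ / τ^2 - β*τ^2 = v := by
      rw [← hveq', hτdef]
      rcases abs_choice t₁ with hh | hh
      · rw [hh]
      · rw [hh, lem_EE_even, neg_pow]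
        norm_num
    have ha₁mem : (1+τ)/2 ∈ Set.Icc (0:ℝ) 1 := ⟨by linarith, by linarith⟩
    have he₁ : 2*((1+τ)/2) - 1 = τ := by ring
    have ha₁ne : 2*((1+τ)/2) - 1 ≠ 0 := by rw [he₁]; exact hτ0.ne'
    have hd := lem_diff (β := β) (h := h) ha₁mem.1 ha₁mem.2 ha₁ne
    rw [he₁, hτval] at hd
    have ha₁gt : Af β h (1/2) < Af β h ((1+τ)/2) := by
      nlinarith [pow_pos hτ0 2]
    obtain ⟨x₀, hx₀mem, hx₀max⟩ := isCompact_Icc.exists_isMaxOn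
      (Set.nonempty_Icc.mpr (by norm_num : (0:ℝ) ≤ 1)) ((lem_Af_cont β h).continuousOn)
    have hx₀max' : ∀ y ∈ Set.Icc (0:ℝ) 1, Af β h y ≤ Af β h x₀ := fun y hy => hx₀max hy
    obtain ⟨ap, hapdef⟩ : ∃ ap : ℝ, ap = max x₀ (1 - x₀) := ⟨_, rfl⟩
    have hx₀0 : (0:ℝ) ≤ x₀ := hx₀mem.1
    have hx₀1 : x₀ ≤ 1 := hx₀mem.2
    have hap_ge : 1/2 ≤ ap := by
      rcases max_cases x₀ (1-x₀) with ⟨he, hc⟩ | ⟨he, hc⟩ <;> rw [hapdef, he] <;> linarith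
    have hap_le1 : ap ≤ 1 := by
      rcases max_cases x₀ (1-x₀) with ⟨he, hc⟩ | ⟨he, hc⟩ <;> rw [hapdef, he] <;> linarith
    have hapval : Af β h ap = Af β h x₀ := by
      rcases max_cases x₀ (1-x₀) with ⟨he, hc⟩ | ⟨he, hc⟩ <;> rw [hapdef, he]
      exact lem_Af_sym β h x₀
    have hapmax : ∀ y ∈ Set.Icc (0:ℝ) 1, Af β h y ≤ Af β h ap := by
      intro y hy
      rw [hapval]
      exact hx₀max' y hy
    have hap_gt : 1/2 < ap := by
      rcases eq_or_lt_of_le hap_ge with heq | hlt'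
      · exfalso
        have h1 := hapmax _ ha₁mem
        rw [← heq] at h1
        linarith
      · exact hlt'
    have hap_lt1 : ap < 1 := by
      rcases eq_or_lt_of_le hap_le1 with heq | hlt'
      · exfalso
        obtain ⟨a', ha'1, ha'2, ha'3⟩ := lem_endpoint (β := β) (h := h) hβ
        have h1 := hapmax a' ⟨by linarith, by linarith⟩
        rw [heq] at h1
        linarith
      · exact hlt'
    have hammax : ∀ y ∈ Set.Icc (0:ℝ) 1, Af β h y ≤ Af β h (1 - ap) := by
      intro y hy
      rw [lem_Af_sym]
      exact hapmax y hy
    have hamval : Af β h (1 - ap) = Af β h ap := lem_Af_sym β h ap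
    refine ⟨1 - ap, ap, by linarith, by linarith, hap_gt, hap_lt1, by ring,
      hammax, hapmax, ?_, ?_, ?_, ?_, ?_⟩
    · -- uniqueness
      intro x hx hxmax
      by_contra hcon
      push_neg at hcon
      obtain ⟨hxne_am, hxne_ap⟩ := hcon
      obtain ⟨y, hydef⟩ : ∃ y : ℝ, y = max x (1-x) := ⟨_, rfl⟩
      have hyval : Af β h y = Af β h x := by
        rcases max_cases x (1-x) with ⟨he, hc⟩ | ⟨he, hc⟩ <;> rw [hydef, he]
        exact lem_Af_sym β h x
      have hymax : ∀ z ∈ Set.Icc (0:ℝ) 1, Af β h z ≤ Af β h y := by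
        intro z hz
        rw [hyval]
        exact hxmax z hz
      have hy_ge : 1/2 ≤ y := by
        rcases max_cases x (1-x) with ⟨he, hc⟩ | ⟨he, hc⟩ <;> rw [hydef, he] <;>
          [skip; skip] <;> linarith [hx.1, hx.2]
      have hy_le1 : y ≤ 1 := by
        rcases max_cases x (1-x) with ⟨he, hc⟩ | ⟨he, hc⟩ <;> rw [hydef, he] <;>
          linarith [hx.1, hx.2]
      have hy_gt : 1/2 < y := by
        rcases eq_or_lt_of_le hy_ge with heq | hlt'
        · exfalso
          have h1 := hymax _ ha₁mem
          rw [← heq] at h1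
          linarith
        · exact hlt'
      have hy_lt1 : y < 1 := by
        rcases eq_or_lt_of_le hy_le1 with heq | hlt'
        · exfalso
          obtain ⟨a', ha'1, ha'2, ha'3⟩ := lem_endpoint (β := β) (h := h) hβ
          have h1 := hymax a' ⟨by linarith, by linarith⟩
          rw [heq] at h1
          linarith
        · exact hlt'
      have hyne : y ≠ ap := by
        rw [hydef]
        rcases max_cases x (1-x) with ⟨he, hc⟩ | ⟨he, hc⟩ <;> rw [he]
        · exact hxne_ap
        · intro hcc
          apply hxne_am
          linarith
      rcases lt_or_gt_of_ne hyne with hlt' | hgt'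
      · exact lem_uniq_half y ap hy_gt hlt' hap_lt1 hymax hapmax
      · exact lem_uniq_half ap y hap_gt hgt' hy_lt1 hapmax hymax
    · -- deriv at am
      exact (max_on_Icc_isLocalMax (by linarith) (by linarith) hammax).deriv_eq_zero
    · -- second deriv at am
      have hgt2 : Af β h (1/2) < Af β h ap := lt_of_lt_of_le ha₁gt (hapmax _ ha₁mem)
      have hdd := lem_dd_ap hβ hap_gt hap_lt1 hapmax hgt2
      rw [lem_Af_deriv2 (β := β) (h := h)
        (by linarith : (0:ℝ) < 1 - ap) (by linarith : 1 - ap < 1)]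
      have e1 : (2*(1-ap)-1)^2 = (2*ap-1)^2 := by ring
      have e2 : (1:ℝ) - (1-ap) = ap := by ring
      rw [e1, e2]
      linarith
    · -- deriv at ap
      exact (max_on_Icc_isLocalMax (by linarith) hap_lt1 hapmax).deriv_eq_zero
    · -- second deriv at ap
      have hgt2 : Af β h (1/2) < Af β h ap := lt_of_lt_of_le ha₁gt (hapmax _ ha₁mem)
      have hdd := lem_dd_ap hβ hap_gt hap_lt1 hapmax hgt2
      rw [lem_Af_deriv2 (β := β) (h := h) (by linarith : (0:ℝ) < ap) hap_lt1]
      linarith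
end

section
/- Let β > 1/12, and let A(a) = β(2a−1)^4 + g(β)·(2a−1)^2 + I(a) for a ∈ [0,1], where I(a) = −a log a + (a−1) log(1−a) and g(β) = inf_{t∈[−1,1]∖{0}} g_β(t) with g_β(t) = −E(t)/t² − β t² and E(t) = −((1+t)/2) log(1+t) − ((1−t)/2) log(1−t). Then A has exactly three maximizers a_−, 1/2, a_+ with 0 < a_− < 1/2 < a_+ < 1 and a_− + a_+ = 1, and all three maximizers are 2-regular. -/
open Real Set

noncomputable section

namespace FourSpinAux

/-- The entropy-type function. -/
def Ef (t : ℝ) : ℝ := -((1 + t) / 2) * Real.log (1 + t) - ((1 - t) / 2) * Real.log (1 - t)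

/-- Derivative of `Ef`. -/
def Ed (t : ℝ) : ℝ := (Real.log (1 - t) - Real.log (1 + t)) / 2

lemma Ef_zero : Ef 0 = 0 := by simp [Ef]

lemma Ed_zero : Ed 0 = 0 := by simp [Ed]

lemma Ef_even (t : ℝ) : Ef (-t) = Ef t := by
  simp only [Ef]
  have h1 : 1 + -t = 1 - t := by ring
  have h2 : 1 - -t = 1 + t := by ring
  rw [h1, h2]; ring

lemma continuous_Ef : Continuous Ef := by
  have h1 : Continuous fun t : ℝ => (1 + t) * Real.log (1 + t) :=
    Real.continuous_mul_log.comp (by continuity)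
  have h2 : Continuous fun t : ℝ => (1 - t) * Real.log (1 - t) :=
    Real.continuous_mul_log.comp (by continuity)
  have : Ef = fun t => -(1/2) * ((1 + t) * Real.log (1 + t))
      - (1/2) * ((1 - t) * Real.log (1 - t)) := by
    funext t; simp only [Ef]; ring
  rw [this]
  fun_prop

variable {t : ℝ}

lemma hasDerivAt_log_one_add (h1 : -1 < t) :
    HasDerivAt (fun t : ℝ => Real.log (1 + t)) (1 / (1 + t)) t := by
  have p1 : (0:ℝ) < 1 + t := by linarith
  simpa using (((hasDerivAt_id t).const_add 1).log p1.ne')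

lemma hasDerivAt_log_one_sub (h2 : t < 1) :
    HasDerivAt (fun t : ℝ => Real.log (1 - t)) (-(1 / (1 - t))) t := by
  have p2 : (0:ℝ) < 1 - t := by linarith
  have := ((hasDerivAt_id t).const_sub 1).log p2.ne'
  exact this.congr_deriv (by simp [neg_div])

lemma hasDerivAt_Ef (h1 : -1 < t) (h2 : t < 1) : HasDerivAt Ef (Ed t) t := by
  have p1 : (0:ℝ) < 1 + t := by linarith
  have p2 : (0:ℝ) < 1 - t := by linarith
  have dA : HasDerivAt (fun t : ℝ => -((1 + t) / 2))  (-(1/2)) t := by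
    have := (((hasDerivAt_id t).const_add 1).div_const 2).neg
    exact this.congr_deriv (by norm_num)
  have dB : HasDerivAt (fun t : ℝ => (1 - t) / 2) (-(1/2)) t := by
    have := ((hasDerivAt_id t).const_sub 1).div_const 2
    exact this.congr_deriv (by norm_num)
  have dfull := ((dA.mul (hasDerivAt_log_one_add h1)).sub
    (dB.mul (hasDerivAt_log_one_sub h2)))
  have : HasDerivAt Ef ((-(1/2)) * Real.log (1 + t) + (-((1+t)/2)) * (1/(1+t))
      - ((-(1/2)) * Real.log (1 - t) + ((1-t)/2) * (-(1/(1-t))))) t := dfull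
  convert this using 1
  simp only [Ed]
  field_simp
  ring

/-- Second derivative of `Ef`. -/
def Edd (t : ℝ) : ℝ := -(1 / (1 - t^2))

lemma hasDerivAt_Ed (h1 : -1 < t) (h2 : t < 1) : HasDerivAt Ed (Edd t) t := by
  have p1 : (0:ℝ) < 1 + t := by linarith
  have p2 : (0:ℝ) < 1 - t := by linarith
  have dfull := ((hasDerivAt_log_one_sub h2).sub (hasDerivAt_log_one_add h1)).div_const 2
  refine dfull.congr_deriv ?_
  simp only [Edd]
  have e1 : 1 - t^2 = (1+t)*(1-t) := by ring
  rw [e1]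
  field_simp
  ring

end FourSpinAux
namespace FourSpinAux

open Real Set

variable {t : ℝ}

lemma one_sub_sq_pos (h1 : -1 < t) (h2 : t < 1) : 0 < 1 - t^2 := by nlinarith

/-- Generic positivity-from-derivative chain step. -/
lemma pos_on_Ioo {f f' : ℝ → ℝ} (h0 : f 0 = 0)
    (hd : ∀ t ∈ Ioo (-1:ℝ) 1, HasDerivAt f (f' t) t)
    (hp : ∀ t ∈ Ioo (0:ℝ) 1, 0 < f' t) :
    ∀ t ∈ Ioo (0:ℝ) 1, 0 < f t := by
  have hmono : StrictMonoOn f (Ico (0:ℝ) 1) := by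
    apply strictMonoOn_of_deriv_pos (convex_Ico 0 1)
    · intro x hx
      exact (hd x ⟨by linarith [hx.1], hx.2⟩).continuousAt.continuousWithinAt
    · intro x hx
      rw [interior_Ico] at hx
      rw [(hd x ⟨by linarith [hx.1], hx.2⟩).deriv]
      exact hp x hx
  intro s hs
  have := hmono ⟨le_refl 0, by norm_num⟩ ⟨hs.1.le, hs.2⟩ hs.1
  rwa [h0] at this

def Qf (t : ℝ) : ℝ := 5*t*Ed t + t^2/(1-t^2) - 8*Ef t
def Q1 (t : ℝ) : ℝ := (3/2)*(Real.log (1+t) - Real.log (1-t)) - 3*t/(1-t^2) + 2*t^3/(1-t^2)^2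
def Q2 (t : ℝ) : ℝ := 8*t^4/(1-t^2)^3

lemma hasDerivAt_den (t : ℝ) : HasDerivAt (fun t : ℝ => 1 - t^2) (-(2*t)) t := by
  have := (hasDerivAt_pow 2 t).const_sub 1
  exact this.congr_deriv (by norm_num)

lemma hasDerivAt_Qf (h1 : -1 < t) (h2 : t < 1) : HasDerivAt Qf (Q1 t) t := by
  have p1 : (0:ℝ) < 1 + t := by linarith
  have p2 : (0:ℝ) < 1 - t := by linarith
  have pq := one_sub_sq_pos h1 h2
  have d1 : HasDerivAt (fun t : ℝ => 5*t*Ed t) (5*Ed t + 5*t*Edd t) t := by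
    have := (((hasDerivAt_id t).const_mul 5)).mul (hasDerivAt_Ed h1 h2)
    exact this.congr_deriv (by simp)
  have d2 : HasDerivAt (fun t : ℝ => t^2/(1-t^2))
      ((2*t^1*(1-t^2) - t^2*(-(2*t)))/(1-t^2)^2) t :=
    (hasDerivAt_pow 2 t).div (hasDerivAt_den t) pq.ne'
  have d3 := (hasDerivAt_Ef h1 h2).const_mul 8
  have dfull := (d1.add d2).sub d3
  refine dfull.congr_deriv ?_
  simp only [Q1, Ed, Edd]
  field_simp
  ring

lemma hasDerivAt_Q1 (h1 : -1 < t) (h2 : t < 1) : HasDerivAt Q1 (Q2 t) t := by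
  have p1 : (0:ℝ) < 1 + t := by linarith
  have p2 : (0:ℝ) < 1 - t := by linarith
  have pq := one_sub_sq_pos h1 h2
  have d1 := ((hasDerivAt_log_one_add h1).sub (hasDerivAt_log_one_sub h2)).const_mul (3/2 : ℝ)
  have d2 : HasDerivAt (fun t : ℝ => 3*t/(1-t^2))
      ((3*(1-t^2) - 3*t*(-(2*t)))/(1-t^2)^2) t := by
    have h3 : HasDerivAt (fun t : ℝ => 3*t) 3 t := by
      simpa using (hasDerivAt_id t).const_mul (3:ℝ)
    exact h3.div (hasDerivAt_den t) pq.ne'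
  have dden2 : HasDerivAt (fun t : ℝ => (1-t^2)^2) ((2:ℕ)*(1-t^2)^1*(-(2*t))) t :=
    (hasDerivAt_den t).pow 2
  have d3 : HasDerivAt (fun t : ℝ => 2*t^3/(1-t^2)^2)
      ((2*(3*t^2)*(1-t^2)^2 - 2*t^3*((2:ℕ)*(1-t^2)^1*(-(2*t))))/((1-t^2)^2)^2) t := by
    have h3 : HasDerivAt (fun t : ℝ => 2*t^3) (2*(3*t^2)) t := by
      have := (hasDerivAt_pow 3 t).const_mul (2:ℝ)
      norm_num at this
      convert this using 1
    exact h3.div dden2 (by positivity)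
  have dfull := (d1.sub d2).add d3
  refine dfull.congr_deriv ?_
  simp only [Q2]
  field_simp
  ring

lemma Qf_zero : Qf 0 = 0 := by simp [Qf, Ef_zero, Ed_zero]

lemma Q1_zero : Q1 0 = 0 := by simp [Q1]

lemma Q1_pos : ∀ t ∈ Ioo (0:ℝ) 1, 0 < Q1 t := by
  refine pos_on_Ioo Q1_zero (fun t ht => hasDerivAt_Q1 ht.1 ht.2) (fun t ht => ?_)
  have pq := one_sub_sq_pos (by linarith [ht.1] : -1 < t) ht.2
  have : (0:ℝ) < t := ht.1
  simp only [Q2]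
  positivity

lemma Qf_pos : ∀ t ∈ Ioo (0:ℝ) 1, 0 < Qf t :=
  pos_on_Ioo Qf_zero (fun t ht => hasDerivAt_Qf ht.1 ht.2) Q1_pos

end FourSpinAux
namespace FourSpinAux

open Real Set

variable {t : ℝ}

def Vf (t : ℝ) : ℝ := t^4 + 12*(1-t^2)*(Ef t + t^2/2)
def V1 (t : ℝ) : ℝ := -20*t^3 + 12*t - 24*t*Ef t + 12*(1-t^2)*Ed t
def V2 (t : ℝ) : ℝ := -60*t^2 - 24*Ef t - 48*t*Ed t
def V3 (t : ℝ) : ℝ := -120*t - 72*Ed t + 48*t/(1-t^2)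
def V4 (t : ℝ) : ℝ := 24*t^2*(9-5*t^2)/(1-t^2)^2

lemma hasDerivAt_Vf (h1 : -1 < t) (h2 : t < 1) : HasDerivAt Vf (V1 t) t := by
  have da : HasDerivAt (fun t : ℝ => t^4) ((4:ℕ)*t^3) t := hasDerivAt_pow 4 t
  have db : HasDerivAt (fun t : ℝ => 12*(1-t^2)) (12*(-(2*t))) t :=
    (hasDerivAt_den t).const_mul 12
  have dc : HasDerivAt (fun t : ℝ => Ef t + t^2/2) (Ed t + (2:ℕ)*t^1/2) t :=
    (hasDerivAt_Ef h1 h2).add ((hasDerivAt_pow 2 t).div_const 2)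
  have dfull := da.add (db.mul dc)
  refine dfull.congr_deriv ?_
  simp only [V1]
  push_cast
  ring

lemma hasDerivAt_V1 (h1 : -1 < t) (h2 : t < 1) : HasDerivAt V1 (V2 t) t := by
  have pq := one_sub_sq_pos h1 h2
  have da : HasDerivAt (fun t : ℝ => -20*t^3) (-20*((3:ℕ)*t^2)) t :=
    (hasDerivAt_pow 3 t).const_mul (-20)
  have db : HasDerivAt (fun t : ℝ => 12*t) 12 t := by
    simpa using (hasDerivAt_id t).const_mul (12:ℝ)
  have dc : HasDerivAt (fun t : ℝ => 24*t*Ef t) (24*Ef t + 24*t*Ed t) t := by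
    have := ((hasDerivAt_id t).const_mul 24).mul (hasDerivAt_Ef h1 h2)
    exact this.congr_deriv (by simp)
  have dd : HasDerivAt (fun t : ℝ => 12*(1-t^2)*Ed t)
      (12*(-(2*t))*Ed t + 12*(1-t^2)*Edd t) t :=
    ((hasDerivAt_den t).const_mul 12).mul (hasDerivAt_Ed h1 h2)
  have dfull := ((da.add db).sub dc).add dd
  refine dfull.congr_deriv ?_
  simp only [V2, Edd]
  field_simp
  ring

lemma hasDerivAt_V2 (h1 : -1 < t) (h2 : t < 1) : HasDerivAt V2 (V3 t) t := by
  have pq := one_sub_sq_pos h1 h2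
  have da : HasDerivAt (fun t : ℝ => -60*t^2) (-60*((2:ℕ)*t^1)) t :=
    (hasDerivAt_pow 2 t).const_mul (-60)
  have db := (hasDerivAt_Ef h1 h2).const_mul (24:ℝ)
  have dc : HasDerivAt (fun t : ℝ => 48*t*Ed t) (48*Ed t + 48*t*Edd t) t := by
    have := ((hasDerivAt_id t).const_mul 48).mul (hasDerivAt_Ed h1 h2)
    exact this.congr_deriv (by simp)
  have dfull := (da.sub db).sub dc
  refine dfull.congr_deriv ?_
  simp only [V3, Edd]
  field_simp
  ring

lemma hasDerivAt_V3 (h1 : -1 < t) (h2 : t < 1) : HasDerivAt V3 (V4 t) t := by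
  have pq := one_sub_sq_pos h1 h2
  have da : HasDerivAt (fun t : ℝ => -120*t) (-120) t := by
    simpa using (hasDerivAt_id t).const_mul (-120:ℝ)
  have db := (hasDerivAt_Ed h1 h2).const_mul (72:ℝ)
  have dc : HasDerivAt (fun t : ℝ => 48*t/(1-t^2))
      ((48*(1-t^2) - 48*t*(-(2*t)))/(1-t^2)^2) t := by
    have h3 : HasDerivAt (fun t : ℝ => 48*t) 48 t := by
      simpa using (hasDerivAt_id t).const_mul (48:ℝ)
    exact h3.div (hasDerivAt_den t) pq.ne'
  have dfull := (da.sub db).add dc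
  refine dfull.congr_deriv ?_
  simp only [V4, Edd]
  field_simp
  ring

lemma V3_zero : V3 0 = 0 := by simp [V3, Ed_zero]
lemma V2_zero : V2 0 = 0 := by simp [V2, Ef_zero, Ed_zero]
lemma V1_zero : V1 0 = 0 := by simp [V1, Ef_zero, Ed_zero]
lemma Vf_zero : Vf 0 = 0 := by simp [Vf, Ef_zero]

lemma V4_pos : ∀ t ∈ Ioo (0:ℝ) 1, 0 < V4 t := by
  intro t ht
  have pq := one_sub_sq_pos (by linarith [ht.1] : -1 < t) ht.2
  have h9 : (0:ℝ) < 9 - 5*t^2 := by nlinarith [ht.2, ht.1]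
  have : (0:ℝ) < t := ht.1
  simp only [V4]
  positivity

lemma V3_pos : ∀ t ∈ Ioo (0:ℝ) 1, 0 < V3 t :=
  pos_on_Ioo V3_zero (fun t ht => hasDerivAt_V3 ht.1 ht.2) V4_pos
lemma V2_pos : ∀ t ∈ Ioo (0:ℝ) 1, 0 < V2 t :=
  pos_on_Ioo V2_zero (fun t ht => hasDerivAt_V2 ht.1 ht.2) V3_pos
lemma V1_pos : ∀ t ∈ Ioo (0:ℝ) 1, 0 < V1 t :=
  pos_on_Ioo V1_zero (fun t ht => hasDerivAt_V1 ht.1 ht.2) V2_pos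
lemma Vf_pos : ∀ t ∈ Ioo (0:ℝ) 1, 0 < Vf t :=
  pos_on_Ioo Vf_zero (fun t ht => hasDerivAt_Vf ht.1 ht.2) V1_pos

def Wf (t : ℝ) : ℝ := t^4 - 6*(1-t^2)*(2*Ef t - t*Ed t)
def W1 (t : ℝ) : ℝ := 4*t^3 - 6*t + 24*t*Ef t - 6*(1+t^2)*Ed t
def W2 (t : ℝ) : ℝ := 12*t^2 - 6 + 24*Ef t + 12*t*Ed t + 6*(1+t^2)/(1-t^2)
def W3 (t : ℝ) : ℝ := 24*t + 36*Ed t - 12*t/(1-t^2) + 24*t/(1-t^2)^2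
def W4 (t : ℝ) : ℝ := 24*t^2*(3-t^2)*(1+t^2)/(1-t^2)^3

lemma hasDerivAt_onePlusSq (t : ℝ) : HasDerivAt (fun t : ℝ => 1 + t^2) (2*t) t := by
  have := (hasDerivAt_pow 2 t).const_add 1
  exact this.congr_deriv (by norm_num)

lemma hasDerivAt_Wf (h1 : -1 < t) (h2 : t < 1) : HasDerivAt Wf (W1 t) t := by
  have pq := one_sub_sq_pos h1 h2
  have da : HasDerivAt (fun t : ℝ => t^4) ((4:ℕ)*t^3) t := hasDerivAt_pow 4 t
  have db : HasDerivAt (fun t : ℝ => 6*(1-t^2)) (6*(-(2*t))) t :=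
    (hasDerivAt_den t).const_mul 6
  have dc : HasDerivAt (fun t : ℝ => 2*Ef t - t*Ed t)
      (2*Ed t - (Ed t + t*Edd t)) t := by
    have h3 : HasDerivAt (fun t : ℝ => t*Ed t) (Ed t + t*Edd t) t := by
      have := (hasDerivAt_id t).mul (hasDerivAt_Ed h1 h2)
      exact this.congr_deriv (by simp)
    exact ((hasDerivAt_Ef h1 h2).const_mul 2).sub h3
  have dfull := da.sub (db.mul dc)
  refine dfull.congr_deriv ?_
  simp only [W1, Edd]
  field_simp
  ring

lemma hasDerivAt_W1 (h1 : -1 < t) (h2 : t < 1) : HasDerivAt W1 (W2 t) t := by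
  have pq := one_sub_sq_pos h1 h2
  have da : HasDerivAt (fun t : ℝ => 4*t^3) (4*((3:ℕ)*t^2)) t :=
    (hasDerivAt_pow 3 t).const_mul 4
  have db : HasDerivAt (fun t : ℝ => 6*t) 6 t := by
    simpa using (hasDerivAt_id t).const_mul (6:ℝ)
  have dc : HasDerivAt (fun t : ℝ => 24*t*Ef t) (24*Ef t + 24*t*Ed t) t := by
    have := ((hasDerivAt_id t).const_mul 24).mul (hasDerivAt_Ef h1 h2)
    exact this.congr_deriv (by simp)
  have dd : HasDerivAt (fun t : ℝ => 6*(1+t^2)*Ed t)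
      (6*(2*t)*Ed t + 6*(1+t^2)*Edd t) t :=
    ((hasDerivAt_onePlusSq t).const_mul 6).mul (hasDerivAt_Ed h1 h2)
  have dfull := ((da.sub db).add dc).sub dd
  refine dfull.congr_deriv ?_
  simp only [W2, Edd]
  field_simp
  ring

lemma hasDerivAt_W2 (h1 : -1 < t) (h2 : t < 1) : HasDerivAt W2 (W3 t) t := by
  have pq := one_sub_sq_pos h1 h2
  have da : HasDerivAt (fun t : ℝ => 12*t^2) (12*((2:ℕ)*t^1)) t :=
    (hasDerivAt_pow 2 t).const_mul 12
  have db := (hasDerivAt_Ef h1 h2).const_mul (24:ℝ)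
  have dc : HasDerivAt (fun t : ℝ => 12*t*Ed t) (12*Ed t + 12*t*Edd t) t := by
    have := ((hasDerivAt_id t).const_mul 12).mul (hasDerivAt_Ed h1 h2)
    exact this.congr_deriv (by simp)
  have dd : HasDerivAt (fun t : ℝ => 6*(1+t^2)/(1-t^2))
      ((6*(2*t)*(1-t^2) - 6*(1+t^2)*(-(2*t)))/(1-t^2)^2) t :=
    ((hasDerivAt_onePlusSq t).const_mul 6).div (hasDerivAt_den t) pq.ne'
  have dfull := (((da.sub (hasDerivAt_const t (6:ℝ))).add db).add dc).add dd
  refine dfull.congr_deriv ?_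
  simp only [W3, Edd]
  field_simp
  ring

lemma hasDerivAt_W3 (h1 : -1 < t) (h2 : t < 1) : HasDerivAt W3 (W4 t) t := by
  have pq := one_sub_sq_pos h1 h2
  have da : HasDerivAt (fun t : ℝ => 24*t) 24 t := by
    simpa using (hasDerivAt_id t).const_mul (24:ℝ)
  have db := (hasDerivAt_Ed h1 h2).const_mul (36:ℝ)
  have dc : HasDerivAt (fun t : ℝ => 12*t/(1-t^2))
      ((12*(1-t^2) - 12*t*(-(2*t)))/(1-t^2)^2) t := by
    have h3 : HasDerivAt (fun t : ℝ => 12*t) 12 t := by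
      simpa using (hasDerivAt_id t).const_mul (12:ℝ)
    exact h3.div (hasDerivAt_den t) pq.ne'
  have dden2 : HasDerivAt (fun t : ℝ => (1-t^2)^2) ((2:ℕ)*(1-t^2)^1*(-(2*t))) t :=
    (hasDerivAt_den t).pow 2
  have dd : HasDerivAt (fun t : ℝ => 24*t/(1-t^2)^2)
      ((24*(1-t^2)^2 - 24*t*((2:ℕ)*(1-t^2)^1*(-(2*t))))/((1-t^2)^2)^2) t := by
    have h3 : HasDerivAt (fun t : ℝ => 24*t) 24 t := by
      simpa using (hasDerivAt_id t).const_mul (24:ℝ)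
    exact h3.div dden2 (by positivity)
  have dfull := ((da.add db).sub dc).add dd
  refine dfull.congr_deriv ?_
  simp only [W4, Edd]
  field_simp
  ring

lemma W3_zero : W3 0 = 0 := by simp [W3, Ed_zero]
lemma W2_zero : W2 0 = 0 := by norm_num [W2, Ef_zero, Ed_zero]
lemma W1_zero : W1 0 = 0 := by simp [W1, Ef_zero, Ed_zero]
lemma Wf_zero : Wf 0 = 0 := by simp [Wf, Ef_zero, Ed_zero]

lemma W4_pos : ∀ t ∈ Ioo (0:ℝ) 1, 0 < W4 t := by
  intro t ht
  have pq := one_sub_sq_pos (by linarith [ht.1] : -1 < t) ht.2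
  have h9 : (0:ℝ) < 3 - t^2 := by nlinarith [ht.2, ht.1]
  have h8 : (0:ℝ) < 1 + t^2 := by positivity
  have : (0:ℝ) < t := ht.1
  simp only [W4]
  positivity

lemma W3_pos : ∀ t ∈ Ioo (0:ℝ) 1, 0 < W3 t :=
  pos_on_Ioo W3_zero (fun t ht => hasDerivAt_W3 ht.1 ht.2) W4_pos
lemma W2_pos : ∀ t ∈ Ioo (0:ℝ) 1, 0 < W2 t :=
  pos_on_Ioo W2_zero (fun t ht => hasDerivAt_W2 ht.1 ht.2) W3_pos
lemma W1_pos : ∀ t ∈ Ioo (0:ℝ) 1, 0 < W1 t :=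
  pos_on_Ioo W1_zero (fun t ht => hasDerivAt_W1 ht.1 ht.2) W2_pos
lemma Wf_pos : ∀ t ∈ Ioo (0:ℝ) 1, 0 < Wf t :=
  pos_on_Ioo Wf_zero (fun t ht => hasDerivAt_Wf ht.1 ht.2) W1_pos

end FourSpinAux
namespace FourSpinAux

open Real Set

variable {β t : ℝ}

def Rf (t : ℝ) : ℝ := (2*Ef t - t*Ed t)/(2*t^4)
def gb (β t : ℝ) : ℝ := -Ef t / t^2 - β*t^2

lemma gb_even (β t : ℝ) : gb β (-t) = gb β t := by
  simp only [gb, Ef_even, neg_sq]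

lemma hasDerivAt_Rf (h0 : 0 < t) (h2 : t < 1) : HasDerivAt Rf (Qf t/(2*t^5)) t := by
  have h1 : -1 < t := by linarith
  have pq := one_sub_sq_pos h1 h2
  have hnum : HasDerivAt (fun t : ℝ => 2*Ef t - t*Ed t) (2*Ed t - (Ed t + t*Edd t)) t := by
    have h3 : HasDerivAt (fun t : ℝ => t*Ed t) (Ed t + t*Edd t) t := by
      have := (hasDerivAt_id t).mul (hasDerivAt_Ed h1 h2)
      exact this.congr_deriv (by simp)
    exact ((hasDerivAt_Ef h1 h2).const_mul 2).sub h3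
  have hden : HasDerivAt (fun t : ℝ => 2*t^4) (2*((4:ℕ)*t^3)) t :=
    (hasDerivAt_pow 4 t).const_mul 2
  have hne : t ≠ 0 := h0.ne'
  have := hnum.div hden (by positivity)
  refine this.congr_deriv ?_
  simp only [Qf, Edd]
  field_simp
  ring

lemma Rf_strictMonoOn : StrictMonoOn Rf (Ioo (0:ℝ) 1) := by
  apply strictMonoOn_of_deriv_pos (convex_Ioo 0 1)
  · intro x hx
    exact (hasDerivAt_Rf hx.1 hx.2).continuousAt.continuousWithinAt
  · intro x hx
    rw [interior_Ioo] at hx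
    rw [(hasDerivAt_Rf hx.1 hx.2).deriv]
    have hq := Qf_pos x hx
    have hx0 := hx.1
    positivity

lemma Rf_lt (h0 : 0 < t) (h2 : t < 1) : Rf t < 1/(12*(1-t^2)) := by
  have pq := one_sub_sq_pos (by linarith) h2
  have hW := Wf_pos t ⟨h0, h2⟩
  simp only [Wf] at hW
  rw [Rf, div_lt_div_iff₀ (by positivity) (by positivity)]
  nlinarith [hW]

lemma gb_lt_half (h0 : 0 < t) (h2 : t < 1) (hb : 1/(12*(1-t^2)) < β) : gb β t < 1/2 := by
  have pq := one_sub_sq_pos (by linarith) h2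
  have hV := Vf_pos t ⟨h0, h2⟩
  simp only [Vf] at hV
  rw [div_lt_iff₀ (by positivity)] at hb
  have ht2 : (0:ℝ) < t^2 := by positivity
  rw [gb, sub_lt_iff_lt_add, div_lt_iff₀ ht2]
  nlinarith [hV, mul_pos (show (0:ℝ) < β*(12*(1-t^2)) - 1 by linarith) (pow_pos h0 4)]

lemma hasDerivAt_gb (h0 : 0 < t) (h2 : t < 1) :
    HasDerivAt (gb β) (2*t*(Rf t - β)) t := by
  have h1 : (-1:ℝ) < t := by linarith
  have hne : t ≠ 0 := h0.ne'
  have hd1 : HasDerivAt (fun t : ℝ => -Ef t) (-Ed t) t := (hasDerivAt_Ef h1 h2).neg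
  have hd2 : HasDerivAt (fun t : ℝ => -Ef t / t^2)
      ((-Ed t*t^2 - (-Ef t)*((2:ℕ)*t^1))/(t^2)^2) t :=
    hd1.div (hasDerivAt_pow 2 t) (by positivity)
  have hd3 : HasDerivAt (fun t : ℝ => β*t^2) (β*((2:ℕ)*t^1)) t :=
    (hasDerivAt_pow 2 t).const_mul β
  have : HasDerivAt (fun t : ℝ => -Ef t / t^2 - β*t^2)
      ((-Ed t*t^2 - (-Ef t)*((2:ℕ)*t^1))/(t^2)^2 - β*((2:ℕ)*t^1)) t := hd2.sub hd3
  have hgbeq : gb β = fun t : ℝ => -Ef t / t^2 - β*t^2 := rfl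
  rw [hgbeq]
  convert this using 1
  simp only [Rf]
  field_simp
  ring

set_option maxHeartbeats 1000000 in
lemma exists_ts (hβ : 1/12 < β) :
    ∃ ts : ℝ, 0 < ts ∧ ts < 1 ∧ Rf ts = β ∧
      (∀ t, 0 < t → t ≤ 1 → t ≠ ts → gb β ts < gb β t) ∧ gb β ts < 1/2 := by
  have hβ0 : (0:ℝ) < β := by linarith
  set t0 : ℝ := Real.sqrt ((1 - 1/(12*β))/2) with ht0def
  have hb0 : (0:ℝ) < 1 - 1/(12*β) := by
    rw [sub_pos, div_lt_one (by positivity)]; linarith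
  have ht0sq : t0^2 = (1 - 1/(12*β))/2 := Real.sq_sqrt (by positivity)
  have ht0pos : 0 < t0 := Real.sqrt_pos.mpr (by positivity)
  have hx : (0:ℝ) < 1/(12*β) := by positivity
  have ht0lt : t0 < 1 := by nlinarith [ht0sq, ht0pos, sq_nonneg (t0-1)]
  have h1t0 : 0 < 1 - t0^2 := by rw [ht0sq]; linarith
  have hbt0 : 1/(12*(1-t0^2)) < β := by
    have e1 : 12*(1 - t0^2) = 6 + 1/(2*β) := by
      rw [ht0sq]; field_simp; ring
    rw [e1, div_lt_iff₀ (by positivity)]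
    have e2 : β*(6 + 1/(2*β)) = 6*β + 1/2 := by field_simp
    rw [e2]; linarith
  have hR0 : Rf t0 < β := lt_trans (Rf_lt ht0pos ht0lt) hbt0
  have hg0 : gb β t0 < 1/2 := gb_lt_half ht0pos ht0lt hbt0
  set c : ℝ := 8*β + 8*Real.log 2 + 1 with hcdef
  have hlog2 : (0:ℝ) < Real.log 2 := Real.log_pos (by norm_num)
  have hcpos : 0 < c := by positivity
  set t1 : ℝ := max ((1+t0)/2) (1 - Real.exp (-c)) with ht1def
  have ht1lt1 : t1 < 1 := by
    apply max_lt (by linarith)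
    have := Real.exp_pos (-c); linarith
  have ht1half : 1/2 ≤ t1 := le_trans (by linarith) (le_max_left _ _)
  have ht01 : t0 < t1 := lt_of_lt_of_le (by linarith) (le_max_left _ _)
  have ht1pos : 0 < t1 := by linarith
  have h1t1 : 0 < 1 - t1 := by linarith
  have hlog1 : Real.log (1 - t1) ≤ -c := by
    have h2 : 1 - t1 ≤ Real.exp (-c) := by
      have := le_max_right ((1+t0)/2) (1 - Real.exp (-c)); linarith
    calc Real.log (1 - t1) ≤ Real.log (Real.exp (-c)) := Real.log_le_log h1t1 h2
      _ = -c := Real.log_exp _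
  -- lower bound on Ef
  have hEflb : ∀ s : ℝ, 0 ≤ s → s ≤ 1 → -Real.log 2 ≤ Ef s := by
    intro s hs0 hs1
    have l1 : ((1+s)/2) * Real.log (1+s) ≤ 1 * Real.log 2 := by
      apply mul_le_mul (by linarith) (Real.log_le_log (by linarith) (by linarith))
        (Real.log_nonneg (by linarith)) (by norm_num)
    have l2 : ((1-s)/2) * Real.log (1-s) ≤ 0 :=
      mul_nonpos_of_nonneg_of_nonpos (by linarith)
        (Real.log_nonpos (by linarith) (by linarith))
    simp only [Ef]; linarith
  have hR1 : β < Rf t1 := by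
    have hEd1 : 2*β + 2*Real.log 2 + 1/4 ≤ -(t1 * Ed t1) := by
      have l1 : 0 ≤ Real.log (1 + t1) := Real.log_nonneg (by linarith)
      have hs : c ≤ Real.log (1+t1) - Real.log (1-t1) := by
        have := hlog1; linarith
      have hspos : 0 ≤ Real.log (1+t1) - Real.log (1-t1) := le_trans hcpos.le hs
      have e : -(t1 * Ed t1) = t1 * ((Real.log (1+t1) - Real.log (1-t1))/2) := by
        simp only [Ed]; ring
      rw [e]
      have step : (1/2) * ((Real.log (1+t1) - Real.log (1-t1))/2)
          ≤ t1 * ((Real.log (1+t1) - Real.log (1-t1))/2) :=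
        mul_le_mul_of_nonneg_right ht1half (by linarith)
      have : c/4 ≤ (1/2) * ((Real.log (1+t1) - Real.log (1-t1))/2) := by linarith
      calc 2*β + 2*Real.log 2 + 1/4 = c/4 := by rw [hcdef]; ring
        _ ≤ _ := le_trans this step
    have hEf1 := hEflb t1 ht1pos.le ht1lt1.le
    have ht14 : t1^4 < 1 := by
      have := pow_lt_one₀ (le_of_lt ht1pos) ht1lt1 (by norm_num : (4:ℕ) ≠ 0)
      exact this
    rw [Rf, lt_div_iff₀ (by positivity)]
    nlinarith [hEd1, hEf1, ht14]
  -- IVT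
  have hcont : ContinuousOn Rf (Icc t0 t1) := fun x hx =>
    (hasDerivAt_Rf (lt_of_lt_of_le ht0pos hx.1)
      (lt_of_le_of_lt hx.2 ht1lt1)).continuousAt.continuousWithinAt
  obtain ⟨ts, htsmem, hRts⟩ := intermediate_value_Ioo ht01.le hcont ⟨hR0, hR1⟩
  have hts0 : 0 < ts := lt_trans ht0pos htsmem.1
  have hts1 : ts < 1 := lt_trans htsmem.2 ht1lt1
  -- monotonicity of gb
  have hanti : StrictAntiOn (gb β) (Ioc 0 ts) := by
    apply strictAntiOn_of_deriv_neg (convex_Ioc 0 ts)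
    · intro x hx
      exact (hasDerivAt_gb hx.1 (lt_of_le_of_lt hx.2 hts1)).continuousAt.continuousWithinAt
    · intro x hx
      rw [interior_Ioc] at hx
      rw [(hasDerivAt_gb hx.1 (lt_trans hx.2 hts1)).deriv]
      have hRx : Rf x < Rf ts :=
        Rf_strictMonoOn ⟨hx.1, lt_trans hx.2 hts1⟩ ⟨hts0, hts1⟩ hx.2
      rw [hRts] at hRx
      have : 0 < 2*x := by linarith [hx.1]
      nlinarith
  have hmono2 : StrictMonoOn (gb β) (Icc ts 1) := by
    apply strictMonoOn_of_deriv_pos (convex_Icc ts 1)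
    · have hgbeq : gb β = fun t : ℝ => -Ef t / t^2 - β*t^2 := rfl
      rw [hgbeq]
      apply ContinuousOn.sub
      · apply ContinuousOn.div continuous_Ef.neg.continuousOn
          (continuous_pow 2).continuousOn
        intro x hx
        have : 0 < x := lt_of_lt_of_le hts0 hx.1
        positivity
      · exact Continuous.continuousOn (by continuity)
    · intro x hx
      rw [interior_Icc] at hx
      rw [(hasDerivAt_gb (lt_trans hts0 hx.1) hx.2).deriv]
      have hRx : Rf ts < Rf x :=
        Rf_strictMonoOn ⟨hts0, hts1⟩ ⟨lt_trans hts0 hx.1, hx.2⟩ hx.1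
      rw [hRts] at hRx
      have : 0 < 2*x := by linarith [lt_trans hts0 hx.1]
      nlinarith
  have hmin : ∀ t, 0 < t → t ≤ 1 → t ≠ ts → gb β ts < gb β t := by
    intro t h0t ht1' hne
    rcases lt_trichotomy t ts with h | h | h
    · exact hanti ⟨h0t, h.le⟩ ⟨hts0, le_refl ts⟩ h
    · exact absurd h hne
    · exact hmono2 ⟨le_refl ts, hts1.le⟩ ⟨h.le, ht1'⟩ h
  refine ⟨ts, hts0, hts1, hRts, hmin, ?_⟩
  calc gb β ts < gb β t0 := hmin t0 ht0pos ht0lt.le htsmem.1.ne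
    _ < 1/2 := hg0

end FourSpinAux
open Real Set FourSpinAux in
set_option maxHeartbeats 1000000 in
/-- Phase diagram of the four-spin model, critical curve case: for `β > 1/12` and
`h = g(β)`, the function `A(a) = β(2a−1)⁴ + g(β)(2a−1)² + I(a)` has exactly three
maximizers `a₋ < 1/2 < a₊` with `a₋ + a₊ = 1`, all 2-regular. -/
theorem four_spin_phase_diagram_critical (β : ℝ) (hβ : 1 / 12 < β)
    (I : ℝ → ℝ) (hI : ∀ a, I a = -a * Real.log a + (a - 1) * Real.log (1 - a))
    (E : ℝ → ℝ)
    (hE : ∀ t, E t = -((1 + t) / 2) * Real.log (1 + t) -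
      ((1 - t) / 2) * Real.log (1 - t))
    (g : ℝ)
    (hg : g = sInf ((fun t => -E t / t ^ 2 - β * t ^ 2) ''
      (Set.Icc (-1 : ℝ) 1 \ {0})))
    (A : ℝ → ℝ)
    (hA : ∀ a, A a = β * (2 * a - 1) ^ 4 + g * (2 * a - 1) ^ 2 + I a) :
    ∃ am ap : ℝ, 0 < am ∧ am < 1 / 2 ∧ 1 / 2 < ap ∧ ap < 1 ∧ am + ap = 1 ∧
      (∀ y ∈ Set.Icc (0 : ℝ) 1, A y ≤ A am) ∧
      (∀ y ∈ Set.Icc (0 : ℝ) 1, A y ≤ A (1 / 2)) ∧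
      (∀ y ∈ Set.Icc (0 : ℝ) 1, A y ≤ A ap) ∧
      (∀ x ∈ Set.Icc (0 : ℝ) 1,
        (∀ y ∈ Set.Icc (0 : ℝ) 1, A y ≤ A x) → x = am ∨ x = 1 / 2 ∨ x = ap) ∧
      deriv A am = 0 ∧ iteratedDeriv 2 A am < 0 ∧
      deriv A (1 / 2) = 0 ∧ iteratedDeriv 2 A (1 / 2) < 0 ∧
      deriv A ap = 0 ∧ iteratedDeriv 2 A ap < 0 := by
  obtain ⟨ts, hts0, hts1, hRts, hmin, hhalf⟩ := FourSpinAux.exists_ts hβ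
  have hEEf : E = FourSpinAux.Ef := funext fun t => by rw [hE]; rfl
  have htsne : ts ≠ 0 := hts0.ne'
  have hts2 : (0:ℝ) < ts^2 := by positivity
  have h1ts : (0:ℝ) < 1 - ts := by linarith
  have h2ts : (0:ℝ) < 1 + ts := by linarith
  have pqts : (0:ℝ) < 1 - ts^2 := by nlinarith
  -- the infimum is attained at ts
  have hlb : ∀ u : ℝ, u ∈ Set.Icc (-1:ℝ) 1 \ {0} → gb β ts ≤ gb β u := by
    intro u hu
    obtain ⟨⟨hu1, hu2⟩, hu0⟩ := hu
    have hu0' : u ≠ 0 := by simpa using hu0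
    rcases lt_or_gt_of_ne hu0' with h | h
    · rw [← gb_even β u]
      rcases eq_or_ne (-u) ts with he | hne
      · rw [he]
      · exact (hmin (-u) (by linarith) (by linarith) hne).le
    · rcases eq_or_ne u ts with he | hne
      · rw [he]
      · exact (hmin u h hu2 hne).le
  have hgval : g = gb β ts := by
    rw [hg, hEEf]
    exact IsLeast.csInf_eq ⟨⟨ts, ⟨⟨by linarith, hts1.le⟩, by simp [htsne]⟩, rfl⟩,
      fun x hx => by obtain ⟨u, hu, rfl⟩ := hx; exact hlb u hu⟩
  -- the two key algebraic relations at ts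
  have h1 : 2*Ef ts - ts*Ed ts = β*(2*ts^4) := by
    have hrf : Rf ts = (2*Ef ts - ts*Ed ts)/(2*ts^4) := rfl
    rw [hrf, div_eq_iff (by positivity : (2:ℝ)*ts^4 ≠ 0)] at hRts
    exact hRts
  have h2 : g*ts^2 = -Ef ts - β*ts^4 := by
    rw [hgval]
    have hgb : gb β ts = -Ef ts / ts^2 - β*ts^2 := rfl
    rw [hgb]
    field_simp
  -- I in terms of Ef
  have hIEf : ∀ a : ℝ, I a = Ef (2*a-1) + Real.log 2 := by
    intro a
    rw [hI]
    by_cases ha : a = 0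
    · subst ha; norm_num [FourSpinAux.Ef]
    · by_cases ha1 : a = 1
      · subst ha1; norm_num [FourSpinAux.Ef]
      · have e1 : 1 + (2*a-1) = 2*a := by ring
        have e2 : 1 - (2*a-1) = 2*(1-a) := by ring
        simp only [FourSpinAux.Ef, e1, e2]
        rw [Real.log_mul two_ne_zero ha, Real.log_mul two_ne_zero
          (sub_ne_zero_of_ne (Ne.symm ha1))]
        ring
  have hAF : ∀ a : ℝ, A a = β*(2*a-1)^4 + g*(2*a-1)^2 + Ef (2*a-1) + Real.log 2 := by
    intro a; rw [hA, hIEf]; ring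
  -- F is nonpositive
  have hFle : ∀ u : ℝ, -1 ≤ u → u ≤ 1 → β*u^4 + g*u^2 + Ef u ≤ 0 := by
    intro u hu1 hu2
    by_cases hu0 : u = 0
    · subst hu0; simp [Ef_zero]
    · have hglb := hlb u ⟨⟨hu1, hu2⟩, by simp [hu0]⟩
      rw [← hgval] at hglb
      have hid : u^2 * gb β u = -Ef u - β*u^4 := by
        have hgb : gb β u = -Ef u / u^2 - β*u^2 := rfl
        rw [hgb]
        field_simp
      nlinarith [mul_le_mul_of_nonneg_left hglb (sq_nonneg u), hid]
  -- zeros of F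
  have hF0 : ∀ u : ℝ, -1 ≤ u → u ≤ 1 → β*u^4 + g*u^2 + Ef u = 0 →
      u = 0 ∨ u = ts ∨ u = -ts := by
    intro u hu1 hu2 hFu
    by_cases hu0 : u = 0
    · exact Or.inl hu0
    · right
      have hu2pos : (0:ℝ) < u^2 := by positivity
      have hgbu : gb β u = g := by
        have hgb : gb β u = -Ef u / u^2 - β*u^2 := rfl
        rw [hgb]
        rw [div_sub' (ne_of_gt hu2pos), div_eq_iff (ne_of_gt hu2pos)]
        nlinarith [hFu]
      rcases lt_or_gt_of_ne hu0 with h | h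
      · right
        have hgbnu : gb β (-u) = g := by rw [gb_even]; exact hgbu
        by_contra hne
        have hneu : -u ≠ ts := fun hh => hne (by linarith [hh])
        have := hmin (-u) (by linarith) (by linarith) hneu
        rw [hgbnu, ← hgval] at this
        exact lt_irrefl g this
      · left
        by_contra hne
        have := hmin u h hu2 hne
        rw [hgbu, ← hgval] at this
        exact lt_irrefl g this
  -- values of A at the three maximizers
  have hzero : β*ts^4 + g*ts^2 + Ef ts = 0 := by linarith [h2]
  have hmax : ∀ y ∈ Set.Icc (0:ℝ) 1, A y ≤ Real.log 2 := by
    intro y hy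
    rw [hAF]
    have := hFle (2*y-1) (by linarith [hy.1]) (by linarith [hy.2])
    linarith
  have hAam : A ((1-ts)/2) = Real.log 2 := by
    rw [hAF]
    have e : 2*((1-ts)/2)-1 = -ts := by ring
    rw [e, Ef_even]
    linear_combination h2
  have hAap : A ((1+ts)/2) = Real.log 2 := by
    rw [hAF]
    have e : 2*((1+ts)/2)-1 = ts := by ring
    rw [e]
    linear_combination h2
  have hAhalf : A (1/2) = Real.log 2 := by
    rw [hAF]
    norm_num [Ef_zero]
  -- derivative machinery
  have haff : ∀ a : ℝ, HasDerivAt (fun a : ℝ => 2*a-1) 2 a := fun a => by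
    simpa using ((hasDerivAt_id a).const_mul 2).sub_const 1
  have hAd : ∀ a : ℝ, 0 < a → a < 1 → HasDerivAt A
      (8*β*(2*a-1)^3 + 4*g*(2*a-1) + (Real.log (1-a) - Real.log a)) a := by
    intro a h0 h1'
    have hAfun : A = fun a => β*(2*a-1)^4 + g*(2*a-1)^2 +
        (-a*Real.log a + (a-1)*Real.log (1-a)) := funext fun a => by rw [hA, hI]
    rw [hAfun]
    have d1 := ((haff a).pow 4).const_mul β
    have d2 := ((haff a).pow 2).const_mul g
    have d3 := ((hasDerivAt_id a).neg).mul (Real.hasDerivAt_log h0.ne')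
    have d4 := ((hasDerivAt_id a).sub_const 1).mul (hasDerivAt_log_one_sub h1')
    have dfull := (d1.add d2).add (d3.add d4)
    refine dfull.congr_deriv ?_
    have hane : a ≠ 0 := h0.ne'
    have h1a : (1:ℝ) - a ≠ 0 := by intro hh; apply absurd h1' (by intro _; linarith [hh]); 
    simp only [Pi.neg_apply, id_eq]
    field_simp
    ring
  have hdval : ∀ a:ℝ, 0<a → a<1 → deriv A a =
      8*β*(2*a-1)^3 + 4*g*(2*a-1) + (Real.log (1-a) - Real.log a) :=
    fun a h0 h1' => (hAd a h0 h1').deriv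
  have hD1d : ∀ a:ℝ, 0<a → a<1 → HasDerivAt
      (fun a => 8*β*(2*a-1)^3 + 4*g*(2*a-1) + (Real.log (1-a) - Real.log a))
      (48*β*(2*a-1)^2 + 8*g - (1/(1-a) + 1/a)) a := by
    intro a h0 h1'
    have d1 := ((haff a).pow 3).const_mul (8*β)
    have d2 := (haff a).const_mul (4*g)
    have d3 := (hasDerivAt_log_one_sub h1').sub (Real.hasDerivAt_log h0.ne')
    have dfull := (d1.add d2).add d3
    refine dfull.congr_deriv ?_
    have hane : a ≠ 0 := h0.ne'
    have h1a : (0:ℝ) < 1 - a := by linarith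
    field_simp
    ring
  have hsecond : ∀ a:ℝ, 0<a → a<1 → iteratedDeriv 2 A a =
      48*β*(2*a-1)^2 + 8*g - (1/(1-a) + 1/a) := by
    intro a h0 h1'
    rw [iteratedDeriv_succ, iteratedDeriv_one]
    have hev : deriv A =ᶠ[nhds a] (fun a => 8*β*(2*a-1)^3 + 4*g*(2*a-1) +
        (Real.log (1-a) - Real.log a)) := by
      filter_upwards [Ioo_mem_nhds h0 h1'] with y hy
      exact (hAd y hy.1 hy.2).deriv
    rw [hev.deriv_eq]
    exact (hD1d a h0 h1').deriv
  have hq := Qf_pos ts ⟨hts0, hts1⟩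
  have hqf : Qf ts = 5*ts*Ed ts + ts^2/(1-ts^2) - 8*Ef ts := rfl
  rw [hqf] at hq
  -- final assembly
  refine ⟨(1-ts)/2, (1+ts)/2, by linarith, by linarith, by linarith, by linarith,
    by ring, ?_, ?_, ?_, ?_, ?_, ?_, ?_, ?_, ?_, ?_⟩
  · intro y hy; rw [hAam]; exact hmax y hy
  · intro y hy; rw [hAhalf]; exact hmax y hy
  · intro y hy; rw [hAap]; exact hmax y hy
  · -- uniqueness
    intro x hx hmaxx
    have hle := hmax x hx
    have hge := hmaxx (1/2) (by norm_num)
    rw [hAhalf] at hge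
    have hAx : A x = Real.log 2 := le_antisymm hle hge
    have hF : β*(2*x-1)^4 + g*(2*x-1)^2 + Ef (2*x-1) = 0 := by
      have := hAF x
      rw [hAx] at this
      linarith
    rcases hF0 (2*x-1) (by linarith [hx.1]) (by linarith [hx.2]) hF with h | h | h
    · right; left; linarith
    · right; right; linarith
    · left; linarith
  · -- deriv A am = 0
    rw [hdval _ (by linarith) (by linarith)]
    have e1 : 2*((1-ts)/2)-1 = -ts := by ring
    have e2 : 1-(1-ts)/2 = (1+ts)/2 := by ring
    rw [e1, e2]
    have hlog : Real.log ((1+ts)/2) - Real.log ((1-ts)/2) = -(2*Ed ts) := by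
      rw [Real.log_div (ne_of_gt h2ts) two_ne_zero,
        Real.log_div (ne_of_gt h1ts) two_ne_zero]
      have : Ed ts = (Real.log (1-ts) - Real.log (1+ts))/2 := rfl
      rw [this]; ring
    rw [hlog]
    have key : ts*(8*β*(-ts)^3 + 4*g*(-ts) + -(2*Ed ts)) = 0 := by
      linear_combination 2*h1 - 4*h2
    rcases mul_eq_zero.mp key with h | h
    · exact absurd h htsne
    · exact h
  · -- iteratedDeriv 2 A am < 0
    rw [hsecond _ (by linarith) (by linarith)]
    have enorm : 48*β*(2*((1-ts)/2)-1)^2 + 8*g - (1/(1-(1-ts)/2) + 1/((1-ts)/2))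
        = 48*β*ts^2 + 8*g - 4/(1-ts^2) := by
      have e2 : 1-(1-ts)/2 = (1+ts)/2 := by ring
      rw [e2]
      field_simp
      ring
    rw [enorm]
    have key : ts^2*(48*β*ts^2 + 8*g - 4/(1-ts^2))
        = -4*(5*ts*Ed ts + ts^2/(1-ts^2) - 8*Ef ts) := by
      linear_combination (-20)*h1 + 8*h2
    nlinarith [key, hq, hts2]
  · -- deriv A (1/2) = 0
    rw [hdval _ (by norm_num) (by norm_num)]
    norm_num
  · -- iteratedDeriv 2 A (1/2) < 0
    rw [hsecond _ (by norm_num) (by norm_num)]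
    have hg2 : g < 1/2 := by rw [hgval]; exact hhalf
    have e : 48*β*(2*(1/2:ℝ)-1)^2 + 8*g - (1/(1-1/2:ℝ) + 1/(1/2:ℝ)) = 8*g - 4 := by
      norm_num
    rw [e]
    linarith
  · -- deriv A ap = 0
    rw [hdval _ (by linarith) (by linarith)]
    have e1 : 2*((1+ts)/2)-1 = ts := by ring
    have e2 : 1-(1+ts)/2 = (1-ts)/2 := by ring
    rw [e1, e2]
    have hlog : Real.log ((1-ts)/2) - Real.log ((1+ts)/2) = 2*Ed ts := by
      rw [Real.log_div (ne_of_gt h1ts) two_ne_zero,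
        Real.log_div (ne_of_gt h2ts) two_ne_zero]
      have : Ed ts = (Real.log (1-ts) - Real.log (1+ts))/2 := rfl
      rw [this]; ring
    rw [hlog]
    have key : ts*(8*β*ts^3 + 4*g*ts + 2*Ed ts) = 0 := by
      linear_combination (-2)*h1 + 4*h2
    rcases mul_eq_zero.mp key with h | h
    · exact absurd h htsne
    · exact h
  · -- iteratedDeriv 2 A ap < 0
    rw [hsecond _ (by linarith) (by linarith)]
    have enorm : 48*β*(2*((1+ts)/2)-1)^2 + 8*g - (1/(1-(1+ts)/2) + 1/((1+ts)/2))
        = 48*β*ts^2 + 8*g - 4/(1-ts^2) := by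
      have e2 : 1-(1+ts)/2 = (1-ts)/2 := by ring
      rw [e2]
      field_simp
      ring
    rw [enorm]
    have key : ts^2*(48*β*ts^2 + 8*g - 4/(1-ts^2))
        = -4*(5*ts*Ed ts + ts^2/(1-ts^2) - 8*Ef ts) := by
      linear_combination (-20)*h1 + 8*h2
    nlinarith [key, hq, hts2]
end
end

section
/- Let A(a) = β(2a−1)^4 + (1/2)(2a−1)^2 + I(a) for a ∈ [0,1], where I(a) = −a log a + (a−1) log(1−a). Then: (i) for every β with 0 < β < 1/12, A has the unique maximizer a = 1/2, and A'(1/2) = A''(1/2) = A'''(1/2) = 0 while A^{(4)}(1/2) < 0 (i.e., the maximizer is 4-regular); (ii) for β = 1/12, A has the unique maximizer a = 1/2, and A^{(k)}(1/2) = 0 for k = 1, ..., 5 while A^{(6)}(1/2) < 0 (i.e., the maximizer is 6-regular). -/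
open Real Set

noncomputable def FS0 (β : ℝ) (x : ℝ) : ℝ :=
  β * (2 * x - 1) ^ 4 + (1 / 2) * (2 * x - 1) ^ 2 + (-(x * Real.log x) - (1 - x) * Real.log (1 - x))
noncomputable def FS1 (β : ℝ) (x : ℝ) : ℝ :=
  8 * β * (2 * x - 1) ^ 3 + 2 * (2 * x - 1) + (Real.log (1 - x) - Real.log x)
noncomputable def FS2 (β : ℝ) (x : ℝ) : ℝ :=
  48 * β * (2 * x - 1) ^ 2 + 4 - (1 - x)⁻¹ - x⁻¹
noncomputable def FS3 (β : ℝ) (x : ℝ) : ℝ :=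
  192 * β * (2 * x - 1) - ((1 - x) ^ 2)⁻¹ + (x ^ 2)⁻¹
noncomputable def FS4 (β : ℝ) (x : ℝ) : ℝ :=
  384 * β - 2 * ((1 - x) ^ 3)⁻¹ - 2 * (x ^ 3)⁻¹
noncomputable def FS5 (x : ℝ) : ℝ := -6 * ((1 - x) ^ 4)⁻¹ + 6 * (x ^ 4)⁻¹
noncomputable def FS6 (x : ℝ) : ℝ := -24 * ((1 - x) ^ 5)⁻¹ - 24 * (x ^ 5)⁻¹

section
variable {β x : ℝ}

lemma hD0 (β : ℝ) (hx : x ∈ Ioo (0:ℝ) 1) : HasDerivAt (FS0 β) (FS1 β x) x := by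
  obtain ⟨h0, h1⟩ := hx
  have hx0 : x ≠ 0 := ne_of_gt h0
  have hx1 : (1 - x) ≠ 0 := by linarith
  have d1 : HasDerivAt (fun x : ℝ => 2 * x - 1) 2 x := by
    simpa using ((hasDerivAt_id x).const_mul 2).sub_const 1
  have d1x : HasDerivAt (fun x : ℝ => 1 - x) (-1) x := by
    simpa using (hasDerivAt_id x).const_sub 1
  have h := (((d1.pow 4).const_mul β).add ((d1.pow 2).const_mul (1/2))).add
      (((hasDerivAt_id x).mul (Real.hasDerivAt_log hx0)).neg.sub (d1x.mul (d1x.log hx1)))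
  unfold FS0 FS1
  refine h.congr_deriv ?_
  simp only [id_eq, Pi.pow_apply]
  field_simp
  ring

lemma hD1 (β : ℝ) (hx : x ∈ Ioo (0:ℝ) 1) : HasDerivAt (FS1 β) (FS2 β x) x := by
  obtain ⟨h0, h1⟩ := hx
  have hx0 : x ≠ 0 := ne_of_gt h0
  have hx1 : (1 - x) ≠ 0 := by linarith
  have d1 : HasDerivAt (fun x : ℝ => 2 * x - 1) 2 x := by
    simpa using ((hasDerivAt_id x).const_mul 2).sub_const 1
  have d1x : HasDerivAt (fun x : ℝ => 1 - x) (-1) x := by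
    simpa using (hasDerivAt_id x).const_sub 1
  have h := (((d1.pow 3).const_mul (8 * β)).add (d1.const_mul 2)).add
      ((d1x.log hx1).sub (Real.hasDerivAt_log hx0))
  unfold FS1 FS2
  refine h.congr_deriv ?_
  field_simp
  ring

lemma hD2 (β : ℝ) (hx : x ∈ Ioo (0:ℝ) 1) : HasDerivAt (FS2 β) (FS3 β x) x := by
  obtain ⟨h0, h1⟩ := hx
  have hx0 : x ≠ 0 := ne_of_gt h0
  have hx1 : (1 - x) ≠ 0 := by linarith
  have d1 : HasDerivAt (fun x : ℝ => 2 * x - 1) 2 x := by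
    simpa using ((hasDerivAt_id x).const_mul 2).sub_const 1
  have d1x : HasDerivAt (fun x : ℝ => 1 - x) (-1) x := by
    simpa using (hasDerivAt_id x).const_sub 1
  have h := ((((d1.pow 2).const_mul (48 * β)).add (hasDerivAt_const x 4)).sub
      (d1x.inv hx1)).sub ((hasDerivAt_id x).inv hx0)
  unfold FS2 FS3
  refine h.congr_deriv ?_
  simp only [id_eq, Pi.pow_apply]
  field_simp
  ring

lemma hD3 (β : ℝ) (hx : x ∈ Ioo (0:ℝ) 1) : HasDerivAt (FS3 β) (FS4 β x) x := by
  obtain ⟨h0, h1⟩ := hx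
  have hx0 : x ≠ 0 := ne_of_gt h0
  have hx1 : (1 - x) ≠ 0 := by linarith
  have d1 : HasDerivAt (fun x : ℝ => 2 * x - 1) 2 x := by
    simpa using ((hasDerivAt_id x).const_mul 2).sub_const 1
  have d1x : HasDerivAt (fun x : ℝ => 1 - x) (-1) x := by
    simpa using (hasDerivAt_id x).const_sub 1
  have h := ((d1.const_mul (192 * β)).sub ((d1x.pow 2).inv (pow_ne_zero 2 hx1))).add
      (((hasDerivAt_id x).pow 2).inv (pow_ne_zero 2 hx0))
  unfold FS3 FS4
  refine h.congr_deriv ?_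
  simp only [id_eq, Pi.pow_apply]
  field_simp
  ring

lemma hD4 (β : ℝ) (hx : x ∈ Ioo (0:ℝ) 1) : HasDerivAt (FS4 β) (FS5 x) x := by
  obtain ⟨h0, h1⟩ := hx
  have hx0 : x ≠ 0 := ne_of_gt h0
  have hx1 : (1 - x) ≠ 0 := by linarith
  have d1x : HasDerivAt (fun x : ℝ => 1 - x) (-1) x := by
    simpa using (hasDerivAt_id x).const_sub 1
  have h := ((hasDerivAt_const x (384 * β)).sub
      (((d1x.pow 3).inv (pow_ne_zero 3 hx1)).const_mul 2)).sub
      ((((hasDerivAt_id x).pow 3).inv (pow_ne_zero 3 hx0)).const_mul 2)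
  unfold FS4 FS5
  refine h.congr_deriv ?_
  simp only [id_eq, Pi.pow_apply]
  field_simp
  ring

lemma hD5 (hx : x ∈ Ioo (0:ℝ) 1) : HasDerivAt FS5 (FS6 x) x := by
  obtain ⟨h0, h1⟩ := hx
  have hx0 : x ≠ 0 := ne_of_gt h0
  have hx1 : (1 - x) ≠ 0 := by linarith
  have d1x : HasDerivAt (fun x : ℝ => 1 - x) (-1) x := by
    simpa using (hasDerivAt_id x).const_sub 1
  have h := ((((d1x.pow 4).inv (pow_ne_zero 4 hx1)).const_mul (-6)).add
      ((((hasDerivAt_id x).pow 4).inv (pow_ne_zero 4 hx0)).const_mul 6))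
  unfold FS5 FS6
  refine h.congr_deriv ?_
  simp only [id_eq, Pi.pow_apply]
  field_simp
  ring

end

lemma key_log_ineq {t : ℝ} (ht : t ∈ Ioo (0:ℝ) 1) :
    2 * t + (2/3) * t ^ 3 < Real.log (1 + t) - Real.log (1 - t) := by
  set h : ℝ → ℝ := fun t => Real.log (1 + t) - Real.log (1 - t) - 2 * t - (2/3) * t ^ 3 with hh
  have hcont : ContinuousOn h (Ico (0:ℝ) 1) := by
    apply ContinuousOn.sub
    apply ContinuousOn.sub
    apply ContinuousOn.sub
    · exact ContinuousOn.log (continuous_const.add continuous_id).continuousOn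
        (fun x hx => by have := hx.1; positivity)
    · refine ContinuousOn.log (continuous_const.sub continuous_id).continuousOn
        (fun x hx => ?_)
      intro hc; try simp only [id_eq] at hc
      nlinarith [hx.1, hx.2]
    · fun_prop
    · fun_prop
  have hmono : StrictMonoOn h (Ico (0:ℝ) 1) := by
    apply strictMonoOn_of_deriv_pos (convex_Ico _ _) hcont
    rw [interior_Ico]
    intro x hx
    obtain ⟨h0, h1⟩ := hx
    have hx1 : (1 + x) ≠ 0 := by linarith
    have hx2 : (1 - x) ≠ 0 := by linarith
    have d1 : HasDerivAt (fun t : ℝ => 1 + t) 1 x := by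
      simpa using (hasDerivAt_id x).const_add 1
    have d2 : HasDerivAt (fun t : ℝ => 1 - t) (-1) x := by
      simpa using (hasDerivAt_id x).const_sub 1
    have hd0 := (((d1.log hx1).sub (d2.log hx2)).sub
        ((hasDerivAt_id x).const_mul 2)).sub (((hasDerivAt_id x).pow 3).const_mul (2/3))
    have hd : HasDerivAt h (1 / (1 + x) - (-1) / (1 - x) - 2 - (2/3) * (3 * x ^ 2 * 1)) x := by
      refine hd0.congr_deriv ?_
      simp [hh, id_eq]
    rw [hd.deriv]
    have : 1 / (1 + x) - (-1) / (1 - x) - 2 - (2/3) * (3 * x ^ 2 * 1)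
        = 2 * x ^ 4 / ((1 + x) * (1 - x)) := by field_simp; ring
    rw [this]
    have : (0:ℝ) < 1 + x := by linarith
    have : (0:ℝ) < 1 - x := by linarith
    positivity
  have h0 : h 0 = 0 := by simp [hh]
  have := hmono (left_mem_Ico.2 one_pos) (⟨le_of_lt ht.1, ht.2⟩ : t ∈ Ico (0:ℝ) 1) ht.1
  rw [h0] at this
  simp only [hh] at this
  linarith

lemma FS1_neg {β x : ℝ} (hβ : β ≤ 1/12) (hx : x ∈ Ioo (1/2:ℝ) 1) : FS1 β x < 0 := by
  obtain ⟨h0, h1⟩ := hx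
  set t := 2 * x - 1 with htdef
  have ht : t ∈ Ioo (0:ℝ) 1 := ⟨by simp [htdef]; linarith, by simp [htdef]; linarith⟩
  have ht1 : (1 - t) ≠ 0 := by have := ht.2; intro hc; rw [htdef] at hc; linarith
  have ht2 : (1 + t) ≠ 0 := by have := ht.1; intro hc; linarith
  have e1 : Real.log (1 - x) = Real.log (1 - t) - Real.log 2 := by
    rw [show (1 - x) = (1 - t) / 2 by rw [htdef]; ring, Real.log_div ht1 two_ne_zero]
  have e2 : Real.log x = Real.log (1 + t) - Real.log 2 := by
    rw [show x = (1 + t) / 2 by rw [htdef]; ring, Real.log_div ht2 two_ne_zero]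
  have hk := key_log_ineq ht
  unfold FS1
  rw [← htdef, e1, e2]
  have hb : β * t ^ 3 ≤ 1/12 * t ^ 3 :=
    mul_le_mul_of_nonneg_right hβ (le_of_lt (pow_pos ht.1 3))
  clear_value t
  nlinarith [hb, hk]

lemma FS1_pos {β x : ℝ} (hβ : β ≤ 1/12) (hx : x ∈ Ioo (0:ℝ) (1/2)) : 0 < FS1 β x := by
  have hx' : (1 - x) ∈ Ioo (1/2:ℝ) 1 := ⟨by linarith [hx.2], by linarith [hx.1]⟩
  have h := FS1_neg hβ hx'
  have e : FS1 β (1 - x) = -FS1 β x := by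
    unfold FS1
    rw [show (1 : ℝ) - (1 - x) = x by ring]
    ring
  rw [e] at h
  linarith

lemma cont_FS0 (β : ℝ) : Continuous (FS0 β) := by
  unfold FS0
  have c1 : Continuous fun x : ℝ => x * Real.log x := Real.continuous_mul_log
  have c2 : Continuous fun x : ℝ => (1 - x) * Real.log (1 - x) :=
    Real.continuous_mul_log.comp (continuous_const.sub continuous_id)
  fun_prop

lemma deriv_EqOn {g F G : ℝ → ℝ} (hEq : EqOn g F (Ioo 0 1))
    (hF : ∀ x ∈ Ioo (0:ℝ) 1, HasDerivAt F (G x) x) :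
    EqOn (deriv g) G (Ioo 0 1) := fun x hx => by
  rw [Filter.EventuallyEq.deriv_eq
    (Filter.eventuallyEq_of_mem (isOpen_Ioo.mem_nhds hx) hEq), (hF x hx).deriv]


/-- Phase diagram of the four-spin model at `h = 1/2`:
with `A(a) = β(2a−1)⁴ + (1/2)(2a−1)² + I(a)`, (i) for `0 < β < 1/12` the unique
maximizer is `a = 1/2` and it is 4-regular; (ii) for `β = 1/12` the unique maximizer
is `a = 1/2` and it is 6-regular. -/
theorem four_spin_phase_diagram_special_points (β : ℝ)
    (I : ℝ → ℝ) (hI : ∀ a, I a = -a * Real.log a + (a - 1) * Real.log (1 - a))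
    (A : ℝ → ℝ)
    (hA : ∀ a, A a = β * (2 * a - 1) ^ 4 + (1 / 2) * (2 * a - 1) ^ 2 + I a) :
    (0 < β → β < 1 / 12 →
      (∀ y ∈ Set.Icc (0 : ℝ) 1, A y ≤ A (1 / 2)) ∧
      (∀ x ∈ Set.Icc (0 : ℝ) 1, (∀ y ∈ Set.Icc (0 : ℝ) 1, A y ≤ A x) → x = 1 / 2) ∧
      deriv A (1 / 2) = 0 ∧ iteratedDeriv 2 A (1 / 2) = 0 ∧
      iteratedDeriv 3 A (1 / 2) = 0 ∧ iteratedDeriv 4 A (1 / 2) < 0) ∧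
    (β = 1 / 12 →
      (∀ y ∈ Set.Icc (0 : ℝ) 1, A y ≤ A (1 / 2)) ∧
      (∀ x ∈ Set.Icc (0 : ℝ) 1, (∀ y ∈ Set.Icc (0 : ℝ) 1, A y ≤ A x) → x = 1 / 2) ∧
      (∀ k : ℕ, 1 ≤ k → k ≤ 5 → iteratedDeriv k A (1 / 2) = 0) ∧
      iteratedDeriv 6 A (1 / 2) < 0) := by
  have hAF : A = FS0 β := funext fun a => by rw [hA, hI]; unfold FS0; ring
  have contA : Continuous A := hAF ▸ cont_FS0 β
  have E0 : EqOn A (FS0 β) (Ioo 0 1) := fun x _ => congrFun hAF x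
  have E1 : EqOn (deriv A) (FS1 β) (Ioo 0 1) := deriv_EqOn E0 (fun x hx => hD0 β hx)
  have E2 : EqOn (deriv (deriv A)) (FS2 β) (Ioo 0 1) := deriv_EqOn E1 (fun x hx => hD1 β hx)
  have E3 : EqOn (deriv (deriv (deriv A))) (FS3 β) (Ioo 0 1) :=
    deriv_EqOn E2 (fun x hx => hD2 β hx)
  have E4 : EqOn (deriv (deriv (deriv (deriv A)))) (FS4 β) (Ioo 0 1) :=
    deriv_EqOn E3 (fun x hx => hD3 β hx)
  have E5 : EqOn (deriv (deriv (deriv (deriv (deriv A))))) FS5 (Ioo 0 1) :=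
    deriv_EqOn E4 (fun x hx => hD4 β hx)
  have E6 : EqOn (deriv (deriv (deriv (deriv (deriv (deriv A)))))) FS6 (Ioo 0 1) :=
    deriv_EqOn E5 (fun x hx => hD5 hx)
  have hhalf : (1/2 : ℝ) ∈ Ioo (0:ℝ) 1 := by norm_num
  have i1 : iteratedDeriv 1 A = deriv A := by
    rw [iteratedDeriv_succ, iteratedDeriv_zero]
  have i2 : iteratedDeriv 2 A = deriv (deriv A) := by
    rw [show (2:ℕ) = 1 + 1 from rfl, iteratedDeriv_succ, i1]
  have i3 : iteratedDeriv 3 A = deriv (deriv (deriv A)) := by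
    rw [show (3:ℕ) = 2 + 1 from rfl, iteratedDeriv_succ, i2]
  have i4 : iteratedDeriv 4 A = deriv (deriv (deriv (deriv A))) := by
    rw [show (4:ℕ) = 3 + 1 from rfl, iteratedDeriv_succ, i3]
  have i5 : iteratedDeriv 5 A = deriv (deriv (deriv (deriv (deriv A)))) := by
    rw [show (5:ℕ) = 4 + 1 from rfl, iteratedDeriv_succ, i4]
  have i6 : iteratedDeriv 6 A = deriv (deriv (deriv (deriv (deriv (deriv A))))) := by
    rw [show (6:ℕ) = 5 + 1 from rfl, iteratedDeriv_succ, i5]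
  -- maximizer statements given β ≤ 1/12
  have main : β ≤ 1/12 → (∀ y ∈ Set.Icc (0 : ℝ) 1, A y ≤ A (1 / 2)) ∧
      (∀ x ∈ Set.Icc (0 : ℝ) 1, (∀ y ∈ Set.Icc (0 : ℝ) 1, A y ≤ A x) → x = 1 / 2) := by
    intro hβ
    have mono : StrictMonoOn A (Icc 0 (1/2)) := by
      apply strictMonoOn_of_deriv_pos (convex_Icc _ _) contA.continuousOn
      rw [interior_Icc]
      intro x hx
      have hx1 : x ∈ Ioo (0:ℝ) 1 := ⟨hx.1, by linarith [hx.2]⟩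
      rw [E1 hx1]
      exact FS1_pos hβ hx
    have anti : StrictAntiOn A (Icc (1/2) 1) := by
      apply strictAntiOn_of_deriv_neg (convex_Icc _ _) contA.continuousOn
      rw [interior_Icc]
      intro x hx
      have hx1 : x ∈ Ioo (0:ℝ) 1 := ⟨by linarith [hx.1], hx.2⟩
      rw [E1 hx1]
      exact FS1_neg hβ hx
    have hmax : ∀ y ∈ Set.Icc (0 : ℝ) 1, y ≠ 1/2 → A y < A (1/2) := by
      intro y hy hne
      rcases lt_or_gt_of_ne hne with h | h
      · exact mono ⟨hy.1, le_of_lt h⟩ ⟨hy.1.trans (le_of_lt h), le_refl _⟩ h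
      · exact anti ⟨by norm_num, by norm_num⟩ ⟨le_of_lt h, hy.2⟩ h
    constructor
    · intro y hy
      by_cases hne : y = 1/2
      · rw [hne]
      · exact le_of_lt (hmax y hy hne)
    · intro x hx hmx
      by_contra hne
      have h1 := hmax x hx hne
      have h2 := hmx (1/2) (by norm_num)
      linarith
  refine ⟨fun hβ0 hβ => ?_, fun hβ => ?_⟩
  · obtain ⟨m1, m2⟩ := main (le_of_lt hβ)
    refine ⟨m1, m2, ?_, ?_, ?_, ?_⟩
    · rw [E1 hhalf]; unfold FS1; norm_num
    · rw [i2, E2 hhalf]; unfold FS2; norm_num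
    · rw [i3, E3 hhalf]; unfold FS3; norm_num
    · rw [i4, E4 hhalf]; unfold FS4; norm_num; linarith
  · obtain ⟨m1, m2⟩ := main (le_of_eq hβ)
    refine ⟨m1, m2, ?_, ?_⟩
    · intro k hk1 hk5
      interval_cases k
      · rw [i1, E1 hhalf]; unfold FS1; norm_num
      · rw [i2, E2 hhalf]; unfold FS2; norm_num
      · rw [i3, E3 hhalf]; unfold FS3; norm_num
      · rw [i4, E4 hhalf]; unfold FS4; rw [hβ]; norm_num
      · rw [i5, E5 hhalf]; unfold FS5; norm_num
    · rw [i6, E6 hhalf]; unfold FS6; norm_num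
end
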